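/- arXiv:2005.01660 — 8 statements merged into one kernel-verified Lean document; each statement's English description precedes it below -/
import Mathlib

section
/- For every sequence of nonnegative real numbers (a_n) in ℓ^p with 1 < p < ∞, the inequality ∑_{n=1}^∞ ((1/n) ∑_{k=1}^n a_k)^p ≤ (p/(p-1))^p ∑_{n=1}^∞ a_n^p holds (Hardy's inequality). -/
/-!
Elliott's proof. Write `A n` for the mean of `a 0, …, a n`, so that
`a n = (n + 1) A n - n A (n - 1)`. Young's inequality for `A (n - 1) * A n ^ (p - 1)` turns this
identity into `(p - 1) A n ^ p - p a n A n ^ (p - 1) ≤ n A (n - 1) ^ p - (n + 1) A n ^ p`, whose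
right-hand side telescopes. Summing gives `(p - 1) ∑ A ^ p ≤ p ∑ a A ^ (p - 1)`, and Hölder's
inequality bounds the right-hand side by `p (∑ a ^ p) ^ (1/p) (∑ A ^ p) ^ (1 - 1/p)`. Dividing out
yields the inequality for every partial sum, hence for the series.
-/

open Finset

noncomputable def cesaroMean (a : ℕ → ℝ) (n : ℕ) : ℝ :=
  (1 / ((n : ℝ) + 1)) * ∑ k ∈ range (n + 1), a k

namespace Real

lemma mul_mul_rpow_sub_one_le {p x y : ℝ} (hp : 1 < p) (hx : 0 ≤ x) (hy : 0 ≤ y) :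
    p * (x * y ^ (p - 1)) ≤ x ^ p + (p - 1) * y ^ p := by
  have hpq := HolderConjugate.conjExponent hp
  have hyoung := young_inequality_of_nonneg hx (rpow_nonneg hy (p - 1)) hpq
  rw [← rpow_mul hy, hpq.sub_one_mul_conj, conjExponent] at hyoung
  have hp1 : 0 < p - 1 := sub_pos.2 hp
  calc p * (x * y ^ (p - 1)) ≤ p * (x ^ p / p + y ^ p / (p / (p - 1))) := by gcongr
    _ = x ^ p + (p - 1) * y ^ p := by field_simp

lemma le_rpow_mul_of_le_mul_rpow_mul_rpow {p q c S T : ℝ} (hpq : p.HolderConjugate q)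
    (hc : 0 ≤ c) (hS : 0 ≤ S) (hT : 0 ≤ T) (h : T ≤ c * S ^ (1 / p) * T ^ (1 / q)) :
    T ≤ c ^ p * S := by
  rcases hT.eq_or_lt with rfl | hT_pos
  · positivity
  have hsplit : T = T ^ (1 / p) * T ^ (1 / q) := by
    rw [← rpow_add hT_pos, one_div, one_div, hpq.inv_add_inv_eq_one, rpow_one]
  have hroot : T ^ (1 / p) ≤ c * S ^ (1 / p) := by
    refine le_of_mul_le_mul_right ?_ (rpow_pos_of_pos hT_pos (1 / q))
    rwa [← hsplit]
  calc T = (T ^ (1 / p)) ^ p := by rw [← rpow_mul hT, one_div_mul_cancel hpq.ne_zero, rpow_one]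
    _ ≤ (c * S ^ (1 / p)) ^ p := by gcongr; exact hpq.nonneg
    _ = c ^ p * S := by
      rw [mul_rpow hc (by positivity), ← rpow_mul hS, one_div_mul_cancel hpq.ne_zero, rpow_one]

end Real

namespace cesaroMean

variable {a : ℕ → ℝ}

lemma nonneg (ha : ∀ n, 0 ≤ a n) (n : ℕ) : 0 ≤ cesaroMean a n :=
  mul_nonneg (by positivity) (sum_nonneg fun k _ => ha k)

lemma succ_mul (a : ℕ → ℝ) (n : ℕ) :
    ((n : ℝ) + 1) * cesaroMean a n = ∑ k ∈ range (n + 1), a k := by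
  rw [cesaroMean, ← mul_assoc, mul_one_div_cancel (by positivity), one_mul]

lemma eq_succ_mul_sub_mul_pred (a : ℕ → ℝ) (n : ℕ) :
    a n = ((n : ℝ) + 1) * cesaroMean a n - n * cesaroMean a (n - 1) := by
  cases n with
  | zero => simp [cesaroMean]
  | succ m =>
    rw [Nat.add_sub_cancel, succ_mul, Nat.cast_succ, succ_mul, sum_range_succ]
    ring

lemma sub_one_mul_rpow_sub_le {p : ℝ} (hp : 1 < p) (ha : ∀ n, 0 ≤ a n) (n : ℕ) :
    (p - 1) * cesaroMean a n ^ p - p * (a n * cesaroMean a n ^ (p - 1)) ≤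
      n * cesaroMean a (n - 1) ^ p - ((n : ℝ) + 1) * cesaroMean a n ^ p := by
  set A := cesaroMean a
  have hyoung := Real.mul_mul_rpow_sub_one_le hp (nonneg ha (n - 1)) (nonneg ha n)
  have hpow : A n ^ p = A n * A n ^ (p - 1) := by
    conv_lhs => rw [← add_sub_cancel (1 : ℝ) p]
    rw [Real.rpow_add_of_nonneg (nonneg ha n) zero_le_one (sub_pos.2 hp).le, Real.rpow_one]
  rw [eq_succ_mul_sub_mul_pred a n, hpow]
  rw [hpow] at hyoung
  nlinarith [mul_le_mul_of_nonneg_left hyoung (Nat.cast_nonneg n : (0 : ℝ) ≤ n)]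

lemma sub_one_mul_sum_rpow_le {p : ℝ} (hp : 1 < p) (ha : ∀ n, 0 ≤ a n) (N : ℕ) :
    (p - 1) * ∑ n ∈ range N, cesaroMean a n ^ p ≤
      p * ∑ n ∈ range N, a n * cesaroMean a n ^ (p - 1) := by
  set f : ℕ → ℝ := fun n => n * cesaroMean a (n - 1) ^ p
  have htelescope : ∑ n ∈ range N, (f n - f (n + 1)) = f 0 - f N := sum_range_sub' f N
  have hstep : ∀ n ∈ range N, (p - 1) * cesaroMean a n ^ p - p * (a n * cesaroMean a n ^ (p - 1))
      ≤ f n - f (n + 1) := fun n _ => by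
    simpa [f, Nat.cast_succ] using sub_one_mul_rpow_sub_le hp ha n
  have hsum := sum_le_sum hstep
  rw [htelescope, sum_sub_distrib, ← mul_sum, ← mul_sum] at hsum
  have hfN : 0 ≤ f N := mul_nonneg N.cast_nonneg (Real.rpow_nonneg (nonneg ha _) p)
  simp only [f, CharP.cast_eq_zero, zero_mul] at hsum
  linarith

theorem sum_rpow_le {p : ℝ} (hp : 1 < p) (ha : ∀ n, 0 ≤ a n) (N : ℕ) :
    ∑ n ∈ range N, cesaroMean a n ^ p ≤ (p / (p - 1)) ^ p * ∑ n ∈ range N, a n ^ p := by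
  have hpq := Real.HolderConjugate.conjExponent hp
  have hp1 : 0 < p - 1 := sub_pos.2 hp
  set T := ∑ n ∈ range N, cesaroMean a n ^ p
  have hholder := Real.inner_le_Lp_mul_Lq_of_nonneg (s := range N) (f := a)
    (g := fun n => cesaroMean a n ^ (p - 1)) hpq (fun n _ => ha n)
    (fun n _ => Real.rpow_nonneg (nonneg ha n) _)
  have hconj : ∑ n ∈ range N, (cesaroMean a n ^ (p - 1)) ^ p.conjExponent = T :=
    sum_congr rfl fun n _ => by rw [← Real.rpow_mul (nonneg ha n), hpq.sub_one_mul_conj]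
  rw [hconj] at hholder
  refine Real.le_rpow_mul_of_le_mul_rpow_mul_rpow hpq (by positivity)
    (sum_nonneg fun n _ => Real.rpow_nonneg (ha n) p)
    (sum_nonneg fun n _ => Real.rpow_nonneg (nonneg ha n) p) ?_
  rw [mul_assoc, div_mul_eq_mul_div, le_div_iff₀ hp1, mul_comm T]
  exact (sub_one_mul_sum_rpow_le hp ha N).trans (by gcongr)

end cesaroMean

/-- The sequence is indexed from 0: `a n` stands for the classical `a_{n+1}`. -/
theorem hardy_inequality (p : ℝ) (hp : 1 < p) (a : ℕ → ℝ)
    (ha : ∀ n, 0 ≤ a n) (hsum : Summable (fun n => a n ^ p)) :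
    Summable (fun n : ℕ => ((1 / ((n : ℝ) + 1)) * ∑ k ∈ Finset.range (n + 1), a k) ^ p) ∧
    ∑' n : ℕ, ((1 / ((n : ℝ) + 1)) * ∑ k ∈ Finset.range (n + 1), a k) ^ p ≤
      (p / (p - 1)) ^ p * ∑' n : ℕ, a n ^ p := by
  have hbound : ∀ N, ∑ n ∈ range N, cesaroMean a n ^ p ≤ (p / (p - 1)) ^ p * ∑' n, a n ^ p :=
    fun N => (cesaroMean.sum_rpow_le hp ha N).trans <| by
      have hp1 : 0 < p - 1 := sub_pos.2 hp
      gcongr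
      exact hsum.sum_le_tsum _ fun n _ => Real.rpow_nonneg (ha n) p
  have hnonneg : ∀ n, 0 ≤ cesaroMean a n ^ p := fun n => Real.rpow_nonneg (cesaroMean.nonneg ha n) p
  exact ⟨summable_of_sum_range_le hnonneg hbound, Real.tsum_le_of_sum_range_le hnonneg hbound⟩
end

section
/- Let θ : ℝ → ℂ be continuous with support contained in [-1,1], and suppose its Fourier transform satisfies |θ̂(x)| ≤ (1+|x|)^{-a} for some a > 1. Then the trigonometric polynomial k_n^θ(t) := ∑_{|k|≤n} θ(k/(n+1)) e^{ikt} satisfies ‖k_n^θ‖_{L¹(𝕋)} ≤ ‖θ̂‖_{L¹(ℝ)} for every n ≥ 0. -/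
/-!
Poisson summation applied to `y ↦ θ(y/(n+1)) e^{ity}`, whose Fourier transform is a rescaled
translate of `θ̂`, writes the kernel as a periodization:
`k_n^θ(t) = 2π(n+1) ∑_m θ̂((n+1)(2πm - t))`, the series converging by the decay of `θ̂`.
Bounding it by the series of absolute values and integrating over one period unfolds the
periodization into `∫_ℝ 2π(n+1) |θ̂((n+1)x)| dx = 2π ‖θ̂‖_{L¹(ℝ)}`.
-/

open MeasureTheory

/-- Fourier transform with normalization `f̂(ξ) = (1/2π) ∫ f(x) e^{-iξx} dx`. -/
noncomputable def FT (f : ℝ → ℂ) (ξ : ℝ) : ℂ :=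
  (1 / (2 * Real.pi)) * ∫ x : ℝ, f x * Complex.exp (-Complex.I * ξ * x)

/-- The kernel `k_n^θ(t) = ∑_{|k|≤n} θ(k/(n+1)) e^{ikt}`. -/
noncomputable def kern (θ : ℝ → ℂ) (n : ℕ) (t : ℝ) : ℂ :=
  ∑ k ∈ Finset.Icc (-(n : ℤ)) (n : ℤ),
    θ ((k : ℝ) / ((n : ℝ) + 1)) * Complex.exp (Complex.I * (k : ℂ) * (t : ℂ))

open Real Set Filter Asymptotics FourierTransform
open scoped ENNReal

theorem eq_zero_of_support_subset_Icc {E : Type*} [TopologicalSpace E] [Zero E] [T1Space E]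
    {f : ℝ → E} (hf : Continuous f) {a b : ℝ} (hsupp : Function.support f ⊆ Icc a b) {x : ℝ}
    (hx : x ∉ Ioo a b) : f x = 0 := by
  by_contra h
  rw [← interior_Icc] at hx
  exact hx (interior_maximal hsupp (isOpen_compl_singleton.preimage hf) h)

theorem summable_one_add_abs_mul_add_rpow {a c : ℝ} (ha : 1 < a) (hc : c ≠ 0) (x : ℝ) :
    Summable fun m : ℤ => (1 + |c * m + x|) ^ (-a) := by
  -- `0 ^ (-a) = 0`, so the comparison fails at the (at most one) `m` with `m + x / c = 0`.
  have hfin : {m : ℤ | (m : ℝ) + x / c = 0}.Finite :=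
    Set.Subsingleton.finite fun m₁ h₁ m₂ h₂ => by
      have h₁' : (m₁ : ℝ) + x / c = 0 := h₁
      have h₂' : (m₂ : ℝ) + x / c = 0 := h₂
      exact_mod_cast (by linarith : (m₁ : ℝ) = m₂)
  refine (((summable_one_div_int_add_rpow (x / c) a).2 ha).mul_left
    (|c| ^ (-a))).of_norm_bounded_eventually ?_
  filter_upwards [hfin.compl_mem_cofinite] with m hm
  have hm' : (m : ℝ) + x / c ≠ 0 := hm
  have hcm : c * m + x = c * (m + x / c) := by field_simp
  rw [norm_of_nonneg (by positivity), hcm, abs_mul, one_div, ← rpow_neg (abs_nonneg _),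
    ← mul_rpow (abs_nonneg _) (abs_nonneg _)]
  exact rpow_le_rpow_of_nonpos (by positivity) (le_add_of_nonneg_left zero_le_one) (by linarith)

theorem lintegral_Ioc_tsum_add_zsmul {T : ℝ} (hT : 0 < T) (a : ℝ) {F : ℝ → ℝ≥0∞}
    (hF : AEMeasurable F) :
    ∫⁻ t in Ioc a (a + T), ∑' m : ℤ, F (t + m • T) = ∫⁻ x, F x := by
  let e : ℤ ≃ AddSubgroup.zmultiples T :=
    Equiv.ofInjective (· • T) (zsmul_left_strictMono hT).injective
  rw [lintegral_tsum fun m => ?_,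
    (isAddFundamentalDomain_Ioc hT a volume).lintegral_eq_tsum'' F, ← e.tsum_eq]
  · exact tsum_congr fun m => lintegral_congr fun x => congrArg F (add_comm x (m • T))
  · exact (hF.comp_quasiMeasurePreserving
      (measurePreserving_add_right volume _).quasiMeasurePreserving).restrict

theorem setIntegral_norm_le_integral_of_le_tsum {E : Type*} [NormedAddCommGroup E] {k : ℝ → E}
    {h : ℝ → ℝ} {T : ℝ} (hT : 0 < T) (a : ℝ)
    (hk : AEStronglyMeasurable k (volume.restrict (Ioc a (a + T)))) (hh : Integrable h)
    (hh₀ : 0 ≤ h) (hsum : ∀ t ∈ Ioc a (a + T), Summable fun m : ℤ => h (T * m - t))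
    (hle : ∀ t ∈ Ioc a (a + T), ‖k t‖ ≤ ∑' m : ℤ, h (T * m - t)) :
    ∫ t in Ioc a (a + T), ‖k t‖ ≤ ∫ x, h x := by
  have hlint : ∫⁻ t in Ioc a (a + T), ENNReal.ofReal ‖k t‖ ≤ ∫⁻ x, ENNReal.ofReal (h x) :=
    calc ∫⁻ t in Ioc a (a + T), ENNReal.ofReal ‖k t‖
        ≤ ∫⁻ t in Ioc a (a + T), ∑' m : ℤ, ENNReal.ofReal (h (T * m - t)) :=
          setLIntegral_mono' measurableSet_Ioc fun t ht =>
            (ENNReal.ofReal_le_ofReal (hle t ht)).trans_eq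
              (ENNReal.ofReal_tsum_of_nonneg (fun m => hh₀ _) (hsum t ht))
      _ = ∫⁻ t in Ioc a (a + T), ∑' m : ℤ, ENNReal.ofReal (h (-(t + m • T))) := by
          refine lintegral_congr fun t =>
            ((Equiv.neg ℤ).tsum_eq _).symm.trans (tsum_congr fun m => ?_)
          simp only [Equiv.neg_apply, Int.cast_neg, zsmul_eq_mul]
          ring_nf
      _ = ∫⁻ x, ENNReal.ofReal (h x) := by
          rw [lintegral_Ioc_tsum_add_zsmul hT a hh.comp_neg.aemeasurable.ennreal_ofReal,
            lintegral_neg_eq_self (fun x => ENNReal.ofReal (h x))]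
  rw [integral_eq_lintegral_of_nonneg_ae (ae_of_all _ fun _ => norm_nonneg _) hk.norm,
    integral_eq_lintegral_of_nonneg_ae (ae_of_all _ hh₀) hh.1]
  exact ENNReal.toReal_mono hh.lintegral_lt_top.ne hlint

theorem fourier_eq_FT (f : ℝ → ℂ) (ξ : ℝ) : 𝓕 f ξ = 2 * π * FT f (2 * π * ξ) := by
  rw [Real.fourier_real_eq_integral_exp_smul, FT, ← mul_assoc,
    mul_one_div_cancel (by simp [pi_ne_zero]), one_mul]
  refine integral_congr_ae (ae_of_all _ fun x => ?_)
  simp only [smul_eq_mul, mul_comm (Complex.exp _)]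
  congr 2
  push_cast
  ring

theorem FT_mul_exp (f : ℝ → ℂ) (t ξ : ℝ) :
    FT (fun y => f y * Complex.exp (Complex.I * t * y)) ξ = FT f (ξ - t) := by
  simp only [FT, mul_assoc, ← Complex.exp_add]
  congr 3 with x
  push_cast
  ring_nf

theorem FT_comp_div (f : ℝ → ℂ) {N : ℝ} (hN : 0 < N) (ξ : ℝ) :
    FT (fun y => f (y / N)) ξ = N * FT f (N * ξ) := by
  have hN' : (N : ℂ) ≠ 0 := by exact_mod_cast hN.ne'
  have h := Measure.integral_comp_div
    (fun u => f u * Complex.exp (-Complex.I * ↑(N * ξ) * u)) N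
  simp only [abs_of_pos hN, Complex.real_smul] at h
  simp only [FT]
  rw [← mul_left_comm, ← h]
  congr 3 with y
  push_cast
  field_simp

theorem continuous_FT {f : ℝ → ℂ} (hf : Integrable f) : Continuous (FT f) := by
  have h𝓕 : Continuous (𝓕 f) :=
    VectorFourier.fourierIntegral_continuous Real.continuous_fourierChar
      (innerSL ℝ).continuous₂ hf
  refine ((h𝓕.comp (continuous_id.div_const (2 * π))).const_mul (2 * π : ℂ)⁻¹).congr
    fun ξ => ?_
  simp only [Function.comp_apply, fourier_eq_FT, id]
  field_simp

theorem continuous_kern (θ : ℝ → ℂ) (n : ℕ) : Continuous (kern θ n) := by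
  unfold kern
  fun_prop

theorem kern_eq_tsum_FT {θ : ℝ → ℂ} (hcont : Continuous θ)
    (hsupp : Function.support θ ⊆ Icc (-1 : ℝ) 1) (n : ℕ) (t : ℝ)
    (hsum : Summable fun m : ℤ => FT θ ((n + 1) * (2 * π * m - t))) :
    kern θ n t = ∑' m : ℤ, ((2 * π * (n + 1) : ℝ) : ℂ) * FT θ ((n + 1) * (2 * π * m - t)) := by
  set N : ℝ := n + 1 with hN_def
  have hN : 0 < N := by positivity
  set f : ℝ → ℂ := fun y => θ (y / N) * Complex.exp (Complex.I * t * y)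
  -- `Ioo` rather than `Icc`: continuity forces `θ (±1) = 0`, which kills the terms `k = ±(n+1)`.
  have hf_zero : ∀ y, y / N ∉ Ioo (-1) 1 → f y = 0 := fun y hy => by
    simp [f, eq_zero_of_support_subset_Icc hcont hsupp hy]
  have h𝓕f : ∀ ξ : ℝ, 𝓕 f ξ = ((2 * π * N : ℝ) : ℂ) * FT θ (N * (2 * π * ξ - t)) := fun ξ => by
    rw [fourier_eq_FT, FT_mul_exp (fun y => θ (y / N)), FT_comp_div θ hN]
    push_cast
    ring
  have hf_decay : f =O[cocompact ℝ] (|·| ^ (-2 : ℝ)) := by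
    refine (isBigO_zero _ _).congr' ?_ EventuallyEq.rfl
    filter_upwards [(isCompact_Icc (a := -N) (b := N)).compl_mem_cocompact] with y hy
    refine (hf_zero y fun hy' => hy ?_).symm
    rw [mem_Ioo, lt_div_iff₀ hN, div_lt_iff₀ hN] at hy'
    exact ⟨by linarith, by linarith⟩
  have hf_sum : Summable fun m : ℤ => 𝓕 f m :=
    (hsum.mul_left ((2 * π * N : ℝ) : ℂ)).congr fun m => (h𝓕f m).symm
  have hpoisson := Real.tsum_eq_tsum_fourier_of_rpow_decay_of_summable (by fun_prop)
    one_lt_two hf_decay hf_sum 0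
  simp only [zero_add, QuotientAddGroup.mk_zero, fourier_eval_zero, mul_one, h𝓕f] at hpoisson
  rw [← hpoisson, tsum_eq_sum (s := Finset.Icc (-(n : ℤ)) n) fun k hk => hf_zero k fun hk' => ?_]
  · exact Finset.sum_congr rfl fun k _ => by
      simp only [f, hN_def, Complex.ofReal_intCast, mul_right_comm Complex.I]
  · rw [mem_Ioo, lt_div_iff₀ hN, div_lt_iff₀ hN, hN_def] at hk'
    have hlo : -(n : ℤ) - 1 < k := by
      exact_mod_cast (by push_cast; linarith : ((-(n : ℤ) - 1 : ℤ) : ℝ) < k)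
    have hhi : k < n + 1 := by
      exact_mod_cast (by push_cast; linarith : (k : ℝ) < ((n + 1 : ℤ) : ℝ))
    exact hk (Finset.mem_Icc.2 ⟨by omega, by omega⟩)

theorem norm_kern_le_tsum {θ : ℝ → ℂ} (hcont : Continuous θ)
    (hsupp : Function.support θ ⊆ Icc (-1 : ℝ) 1) (n : ℕ) (t : ℝ)
    (hsum : Summable fun m : ℤ => ‖FT θ ((n + 1) * (2 * π * m - t))‖) :
    ‖kern θ n t‖ ≤ ∑' m : ℤ, 2 * π * (n + 1) * ‖FT θ ((n + 1) * (2 * π * m - t))‖ := by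
  have hnorm : ∀ z : ℂ, ‖((2 * π * (n + 1) : ℝ) : ℂ) * z‖ = 2 * π * (n + 1) * ‖z‖ := fun z => by
    rw [norm_mul, Complex.norm_real, norm_of_nonneg (by positivity)]
  rw [kern_eq_tsum_FT hcont hsupp n t hsum.of_norm]
  simp only [← hnorm]
  exact norm_tsum_le_tsum_norm ((hsum.mul_left _).congr fun m => (hnorm _).symm)

/-- If `θ` is continuous with support in `[-1,1]` and `|θ̂(x)| ≤ (1+|x|)^{-a}` for some
`a > 1`, then `‖k_n^θ‖_{L¹(𝕋)} ≤ ‖θ̂‖_{L¹(ℝ)}` for every `n`. -/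
theorem kernel_L1_bound (θ : ℝ → ℂ) (hcont : Continuous θ)
    (hsupp : Function.support θ ⊆ Set.Icc (-1 : ℝ) 1)
    (a : ℝ) (ha : 1 < a)
    (hFT : ∀ x : ℝ, ‖FT θ x‖ ≤ (1 + |x|) ^ (-a)) :
    ∀ n : ℕ,
      (1 / (2 * Real.pi)) * ∫ t in (-Real.pi)..Real.pi, ‖kern θ n t‖ ≤
        ∫ x : ℝ, ‖FT θ x‖ := by
  intro n
  set N : ℝ := n + 1
  have hN : 0 < N := by positivity
  have hθ_int : Integrable θ := hcont.integrable_of_hasCompactSupport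
    (HasCompactSupport.of_support_subset_isCompact isCompact_Icc hsupp)
  have hFT_int : Integrable (FT θ) :=
    (integrable_one_add_norm (by simpa using ha)).mono'
      (continuous_FT hθ_int).aestronglyMeasurable (ae_of_all _ fun x => by simpa using hFT x)
  have hsum : ∀ t : ℝ, Summable fun m : ℤ => ‖FT θ (N * (2 * π * m - t))‖ := fun t =>
    (summable_one_add_abs_mul_add_rpow ha (c := 2 * π * N) (by positivity) (-(N * t))
      ).of_nonneg_of_le (fun _ => norm_nonneg _) fun _ => (hFT _).trans_eq (by ring_nf)
  have hL1 := setIntegral_norm_le_integral_of_le_tsum two_pi_pos (-π) (k := kern θ n)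
    (h := fun x => 2 * π * N * ‖FT θ (N * x)‖) (continuous_kern θ n).aestronglyMeasurable
    ((hFT_int.norm.comp_mul_left' hN.ne').const_mul _) (fun x => by positivity)
    (fun t _ => by simpa using (hsum t).mul_left (2 * π * N))
    fun t _ => norm_kern_le_tsum hcont hsupp n t (hsum t)
  rw [show -π + 2 * π = π by ring, ← intervalIntegral.integral_of_le (by linarith [pi_pos])] at hL1
  calc 1 / (2 * π) * ∫ t in -π..π, ‖kern θ n t‖
      ≤ 1 / (2 * π) * ∫ x, 2 * π * N * ‖FT θ (N * x)‖ := by gcongr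
    _ = ∫ x, ‖FT θ x‖ := by
      rw [integral_const_mul, Measure.integral_comp_mul_left (fun x => ‖FT θ x‖), smul_eq_mul,
        abs_of_pos (inv_pos.2 hN)]
      field_simp
end

section
/- Let θ : ℝ → ℂ be continuous with support in [-1,1], with |θ̂(x)| ≤ (1+|x|)^{-a} for some a > 1. Then there is a constant C, depending only on ‖θ‖_∞, sup_x |θ̂(x)||x|^a, and a, such that the kernel k_n^θ(t) := ∑_{|k|≤n} θ(k/(n+1)) e^{ikt} satisfies |k_n^θ(x)| ≤ C · min{ n+1, (n+1)^{-(a-1)} |x|^{-a} } for all |x| < π. -/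
/-! With `N = n + 1` and `f t = θ (t / N) e^{itx}`, the kernel is `kern θ n x = ∑ₖ f k`, and
Poisson summation turns this into `∑ₘ 𝓕 f m = 2πN ∑ₘ θ̂ (N (2πm - x))`. For `|x| < π` every
point `2πm - x` is at distance at least `|x| max 1 |m|` from `0`, so the decay of `θ̂` bounds the
`m`-th term by `N ^ (-a) |x| ^ (-a) max 1 |m| ^ (-a)`, which is summable in `m` because `a > 1`.
The bound `C (n + 1)` is just `|θ| ≤ M` on each of the `2n + 1` terms. -/

open MeasureTheory

open scoped FourierTransform
open Complex Real

lemma Continuous.support_subset_Ioo {E : Type*} [TopologicalSpace E] [Zero E] [T1Space E]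
    {f : ℝ → E} (hf : Continuous f) {a b : ℝ} (h : Function.support f ⊆ Set.Icc a b) :
    Function.support f ⊆ Set.Ioo a b :=
  interior_Icc (a := a) ▸ interior_maximal h hf.isOpen_support

noncomputable def dilateModulate (θ : ℝ → ℂ) (N x t : ℝ) : ℂ :=
  θ (t / N) * exp (I * t * x)

lemma continuous_dilateModulate {θ : ℝ → ℂ} (hθ : Continuous θ) (N x : ℝ) :
    Continuous (dilateModulate θ N x) := by
  unfold dilateModulate
  fun_prop

lemma dilateModulate_eq_zero {θ : ℝ → ℂ} (hθ : ∀ t, 1 ≤ |t| → θ t = 0) {N : ℝ} (hN : 0 < N)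
    (x : ℝ) {t : ℝ} (ht : N ≤ |t|) : dilateModulate θ N x t = 0 := by
  rw [dilateModulate, hθ _ (by rwa [abs_div, abs_of_pos hN, one_le_div hN]), zero_mul]

lemma hasCompactSupport_dilateModulate {θ : ℝ → ℂ} (hθ : ∀ t, 1 ≤ |t| → θ t = 0) {N : ℝ}
    (hN : 0 < N) (x : ℝ) : HasCompactSupport (dilateModulate θ N x) :=
  HasCompactSupport.intro isCompact_Icc fun _ ht =>
    dilateModulate_eq_zero hθ hN x (not_le.mp fun h => ht (abs_le.mp h)).le

/-- Mathlib's `𝓕 f ξ = ∫ f t e^{-2πitξ} dt`, whereas `FT` uses `e^{-itξ}` and a factor `1 / 2π`. -/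
lemma fourier_dilateModulate (θ : ℝ → ℂ) {N : ℝ} (hN : 0 < N) (x ξ : ℝ) :
    𝓕 (dilateModulate θ N x) ξ = N * (2 * π * FT θ (N * (2 * π * ξ - x))) := by
  have h2π : (2 * π : ℂ) ≠ 0 := by simp [Real.pi_ne_zero]
  have hN' : (N : ℂ) ≠ 0 := by exact_mod_cast hN.ne'
  have hexp : ∀ t : ℝ, exp (((-2 * π * t * ξ : ℝ) : ℂ) * I) • dilateModulate θ N x t =
      (fun s : ℝ => θ s * exp (-I * ((N * (2 * π * ξ - x) : ℝ) : ℂ) * s)) (t / N) := by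
    intro t
    rw [dilateModulate, smul_eq_mul, mul_left_comm, ← Complex.exp_add]
    congr 2
    push_cast
    field_simp
    ring
  rw [Real.fourier_real_eq_integral_exp_smul, integral_congr_ae (.of_forall hexp),
    Measure.integral_comp_div (fun s : ℝ => θ s * exp (-I * ((N * (2 * π * ξ - x) : ℝ) : ℂ) * s)),
    abs_of_pos hN, FT, Complex.real_smul,
    ← mul_assoc (2 * π : ℂ), mul_one_div_cancel h2π, one_mul]

lemma abs_mul_max_one_le_abs_two_pi_mul_sub {x : ℝ} (hx : |x| < π) (m : ℤ) :
    |x| * max 1 |(m : ℝ)| ≤ |2 * π * m - x| := by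
  rcases eq_or_ne m 0 with rfl | hm
  · simp
  have hm1 : 1 ≤ |(m : ℝ)| := by exact_mod_cast Int.one_le_abs hm
  have hmx : 2 * π * |(m : ℝ)| - |x| ≤ |2 * π * m - x| := by
    have := abs_sub_abs_le_abs_sub (2 * π * (m : ℝ)) x
    rwa [abs_mul, abs_of_pos (by positivity : (0 : ℝ) < 2 * π)] at this
  rw [max_eq_right hm1]
  nlinarith [abs_nonneg x]

lemma summable_max_one_abs_rpow_neg {a : ℝ} (ha : 1 < a) :
    Summable fun m : ℤ => max 1 |(m : ℝ)| ^ (-a) := by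
  refine (Real.summable_abs_int_rpow ha).of_norm_bounded_eventually ?_
  filter_upwards [(Set.finite_singleton (0 : ℤ)).compl_mem_cofinite] with m hm
  have hm1 : 1 ≤ |(m : ℝ)| := by exact_mod_cast Int.one_le_abs hm
  rw [max_eq_right hm1, Real.norm_of_nonneg (by positivity)]

lemma norm_fourier_dilateModulate_le {θ : ℝ → ℂ} {a : ℝ} (ha : 0 ≤ a)
    (hFT : ∀ y : ℝ, ‖FT θ y‖ ≤ (1 + |y|) ^ (-a)) {N x : ℝ} (hN : 0 < N) (hx : |x| < π)
    (hx0 : x ≠ 0) (m : ℤ) :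
    ‖𝓕 (dilateModulate θ N x) m‖ ≤
      2 * π * N ^ (-(a - 1)) * |x| ^ (-a) * max 1 |(m : ℝ)| ^ (-a) := by
  have hFT_le : ‖FT θ (N * (2 * π * m - x))‖ ≤ (N * (|x| * max 1 |(m : ℝ)|)) ^ (-a) := by
    refine (hFT _).trans (Real.rpow_le_rpow_of_nonpos (by positivity) ?_ (by linarith))
    rw [abs_mul, abs_of_pos hN]
    nlinarith [abs_mul_max_one_le_abs_two_pi_mul_sub hx m]
  calc ‖𝓕 (dilateModulate θ N x) m‖
      = N * (2 * π * ‖FT θ (N * (2 * π * m - x))‖) := by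
        rw [fourier_dilateModulate θ hN, norm_mul, norm_mul, norm_mul, Complex.norm_real,
          Real.norm_of_nonneg hN.le, Complex.norm_ofNat, Complex.norm_real,
          Real.norm_of_nonneg Real.pi_pos.le]
    _ ≤ N * (2 * π * (N * (|x| * max 1 |(m : ℝ)|)) ^ (-a)) := by gcongr
    _ = 2 * π * (N * N ^ (-a)) * |x| ^ (-a) * max 1 |(m : ℝ)| ^ (-a) := by
        rw [Real.mul_rpow hN.le (by positivity), Real.mul_rpow (abs_nonneg x) (by positivity)]
        ring
    _ = 2 * π * N ^ (-(a - 1)) * |x| ^ (-a) * max 1 |(m : ℝ)| ^ (-a) := by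
        rw [show -(a - 1) = 1 + -a by ring, Real.rpow_add hN, Real.rpow_one]

lemma kern_eq_sum_dilateModulate (θ : ℝ → ℂ) (n : ℕ) (x : ℝ) :
    kern θ n x = ∑ k ∈ Finset.Icc (-(n : ℤ)) n, dilateModulate θ (n + 1) x k := by
  simp only [kern, dilateModulate, Complex.ofReal_intCast]

lemma kern_eq_tsum_fourier {θ : ℝ → ℂ} (hcont : Continuous θ) (hθ : ∀ t, 1 ≤ |t| → θ t = 0)
    (n : ℕ) (x : ℝ) (hsum : Summable fun m : ℤ => 𝓕 (dilateModulate θ (n + 1) x) m) :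
    kern θ n x = ∑' m : ℤ, 𝓕 (dilateModulate θ (n + 1) x) m := by
  have hN : (0 : ℝ) < n + 1 := by positivity
  have hdecay : dilateModulate θ (n + 1) x =O[Filter.cocompact ℝ] fun t => |t| ^ (-2 : ℝ) := by
    have hzero := hasCompactSupport_dilateModulate hθ hN x
    rw [hasCompactSupport_iff_eventuallyEq, Filter.coclosedCompact_eq_cocompact] at hzero
    exact (Asymptotics.isBigO_zero _ _).congr' hzero.symm Filter.EventuallyEq.rfl
  have hpoisson := Real.tsum_eq_tsum_fourier_of_rpow_decay_of_summable
    (continuous_dilateModulate hcont _ x) one_lt_two hdecay hsum 0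
  simp only [zero_add, QuotientAddGroup.mk_zero, fourier_eval_zero, mul_one] at hpoisson
  rw [← hpoisson, kern_eq_sum_dilateModulate, tsum_eq_sum]
  intro k hk
  have hnk : (n : ℤ) + 1 ≤ |k| := by
    rw [Finset.mem_Icc] at hk
    rw [le_abs]
    omega
  exact dilateModulate_eq_zero hθ hN x (by exact_mod_cast hnk)

lemma norm_kern_le {θ : ℝ → ℂ} {M : ℝ} (hM : ∀ t, ‖θ t‖ ≤ M) (n : ℕ) (x : ℝ) :
    ‖kern θ n x‖ ≤ (2 * n + 1) * M := by
  calc ‖kern θ n x‖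
      ≤ ∑ k ∈ Finset.Icc (-(n : ℤ)) n, M := by
        refine (norm_sum_le _ _).trans (Finset.sum_le_sum fun k _ => ?_)
        rw [norm_mul, show I * (k : ℂ) * x = ((k * x : ℝ) : ℂ) * I by push_cast; ring,
          norm_exp_ofReal_mul_I, mul_one]
        exact hM _
    _ = (2 * n + 1) * M := by
        rw [Finset.sum_const, Int.card_Icc, nsmul_eq_mul,
          show (n + 1 - -n : ℤ).toNat = 2 * n + 1 by omega]
        push_cast
        ring

lemma norm_kern_le_of_fourier_decay {θ : ℝ → ℂ} (hcont : Continuous θ) (hθ : ∀ t, 1 ≤ |t| → θ t = 0)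
    {a : ℝ} (ha : 1 < a) (hFT : ∀ y : ℝ, ‖FT θ y‖ ≤ (1 + |y|) ^ (-a)) (n : ℕ) {x : ℝ}
    (hx : |x| < π) (hx0 : x ≠ 0) :
    ‖kern θ n x‖ ≤ 2 * π * (∑' m : ℤ, max 1 |(m : ℝ)| ^ (-a)) * ((n : ℝ) + 1) ^ (-(a - 1)) *
      |x| ^ (-a) := by
  have hN : (0 : ℝ) < n + 1 := by positivity
  have hbound := norm_fourier_dilateModulate_le (by linarith) hFT hN hx hx0
  have hmaj := (summable_max_one_abs_rpow_neg ha).mul_left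
    (2 * π * (n + 1 : ℝ) ^ (-(a - 1)) * |x| ^ (-a))
  have hnorm : Summable fun m : ℤ => ‖𝓕 (dilateModulate θ (n + 1) x) m‖ :=
    hmaj.of_nonneg_of_le (fun _ => norm_nonneg _) hbound
  rw [kern_eq_tsum_fourier hcont hθ n x hnorm.of_norm]
  calc ‖∑' m : ℤ, 𝓕 (dilateModulate θ (n + 1) x) m‖
      ≤ ∑' m : ℤ, 2 * π * (n + 1 : ℝ) ^ (-(a - 1)) * |x| ^ (-a) * max 1 |(m : ℝ)| ^ (-a) :=
        tsum_of_norm_bounded hmaj.hasSum hbound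
    _ = _ := by rw [tsum_mul_left]; ring

/-- If `θ` is continuous with support in `[-1,1]` and `|θ̂(x)| ≤ (1+|x|)^{-a}` for some
`a > 1`, then there is a constant `C` with
`|k_n^θ(x)| ≤ C · min (n+1) ((n+1)^{-(a-1)} |x|^{-a})` for all `|x| < π`
(the second bound being stated for `x ≠ 0`). -/
theorem kernel_pointwise_bound (θ : ℝ → ℂ) (hcont : Continuous θ)
    (hsupp : Function.support θ ⊆ Set.Icc (-1 : ℝ) 1)
    (a : ℝ) (ha : 1 < a)
    (hFT : ∀ x : ℝ, ‖FT θ x‖ ≤ (1 + |x|) ^ (-a)) :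
    ∃ C : ℝ, 0 < C ∧ ∀ (n : ℕ) (x : ℝ), |x| < Real.pi →
      ‖kern θ n x‖ ≤ C * ((n : ℝ) + 1) ∧
      (x ≠ 0 → ‖kern θ n x‖ ≤ C * ((n : ℝ) + 1) ^ (-(a - 1)) * |x| ^ (-a)) := by
  have hθ : ∀ t, 1 ≤ |t| → θ t = 0 := fun t ht =>
    Function.notMem_support.mp fun h => ht.not_gt (abs_lt.mpr (hcont.support_subset_Ioo hsupp h))
  have hcs : HasCompactSupport θ := .intro isCompact_Icc fun _ ht => Function.notMem_support.mp
    (mt (@hsupp _) ht)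
  obtain ⟨M, hM⟩ := hcs.exists_bound_of_continuous hcont
  have hM0 : 0 ≤ M := (norm_nonneg _).trans (hM 0)
  set S := ∑' m : ℤ, max 1 |(m : ℝ)| ^ (-a)
  have hS : 0 ≤ S := tsum_nonneg fun _ => by positivity
  refine ⟨2 * M + 2 * π * S + 1, by positivity, fun n x hx => ⟨?_, fun hx0 => ?_⟩⟩
  · calc ‖kern θ n x‖ ≤ (2 * n + 1) * M := norm_kern_le hM n x
      _ ≤ (2 * M + 2 * π * S + 1) * (n + 1) := by
        nlinarith [mul_nonneg (mul_nonneg Real.pi_pos.le hS) (n.cast_nonneg : (0 : ℝ) ≤ n),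
          mul_nonneg Real.pi_pos.le hS]
  · calc ‖kern θ n x‖ ≤ 2 * π * S * ((n : ℝ) + 1) ^ (-(a - 1)) * |x| ^ (-a) :=
        norm_kern_le_of_fourier_decay hcont hθ ha hFT n hx hx0
      _ ≤ (2 * M + 2 * π * S + 1) * ((n : ℝ) + 1) ^ (-(a - 1)) * |x| ^ (-a) := by
        gcongr
        linarith
end

section
/- For γ > 0, define φ_γ : ℝ → ℝ by φ_γ(x) = max(0, 1-|x|)^γ. Then there is a constant c(γ) > 0 such that the Fourier transform satisfies |φ̂_γ(x)| ≤ c(γ) (1+|x|)^{-min(1,γ)-1} for all x ∈ ℝ. -/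
/-!
Since `φ_γ` is even, `2π φ̂_γ(ξ) = 2 ∫₀¹ t^γ cos(ξ(1-t)) dt`. One integration by parts, whose
boundary terms vanish, turns this into `(2γ/ξ) ∫₀¹ t^(γ-1) sin(ξ(1-t)) dt`. Splitting this integral
at `t = 1/|ξ|`, the piece near the singularity is at most `|ξ|^(-γ)/γ`; on the rest `t^(γ-1)` is
monotone, so a second integration by parts against the bounded antiderivative of the sine gives
`O(|ξ|^(-1) + |ξ|^(-γ))`. Altogether `φ̂_γ(ξ) = O(|ξ|^(-min(1,γ)-1))`, while `|φ̂_γ| ≤ 1`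
trivially for small `ξ`.
-/

open MeasureTheory

open Set intervalIntegral

section IntegrationByParts

variable {g g' : ℝ → ℝ} {a b : ℝ}

theorem abs_integral_mul_le_of_hasDerivAt {v w : ℝ → ℝ} {M : ℝ} (hab : a ≤ b)
    (hg : ∀ x ∈ Icc a b, HasDerivAt g (g' x) x) (hv : ∀ x ∈ Icc a b, HasDerivAt v (w x) x)
    (hg' : IntervalIntegrable g' volume a b) (hw : IntervalIntegrable w volume a b)
    (hM : ∀ x ∈ Icc a b, |v x| ≤ M) :
    |∫ x in a..b, g x * w x| ≤ M * (|g a| + |g b| + ∫ x in a..b, |g' x|) := by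
  rw [← uIcc_of_le hab] at hg hv hM
  have hrest : |∫ x in a..b, g' x * v x| ≤ M * ∫ x in a..b, |g' x| := by
    rw [← intervalIntegral.integral_const_mul]
    refine (abs_integral_le_integral_abs hab).trans (integral_mono_on hab ?_ ?_ fun x hx => ?_)
    · exact (hg'.mul_continuousOn fun x hx => (hv x hx).continuousAt.continuousWithinAt).abs
    · exact hg'.abs.const_mul M
    · rw [abs_mul, mul_comm M]
      exact mul_le_mul_of_nonneg_left (hM x (Icc_subset_uIcc hx)) (abs_nonneg _)
  rw [integral_mul_deriv_eq_deriv_mul hg hv hg' hw]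
  calc |g b * v b - g a * v a - ∫ x in a..b, g' x * v x|
      ≤ |g b| * |v b| + |g a| * |v a| + |∫ x in a..b, g' x * v x| := by
        rw [← abs_mul, ← abs_mul]
        exact (abs_sub _ _).trans (add_le_add_left (abs_sub _ _) _)
    _ ≤ |g b| * M + |g a| * M + M * ∫ x in a..b, |g' x| := by
        gcongr
        exacts [hM b right_mem_uIcc, hM a left_mem_uIcc]
    _ = M * (|g a| + |g b| + ∫ x in a..b, |g' x|) := by ring

theorem integral_abs_deriv_eq_abs_sub (hab : a ≤ b)
    (hg : ∀ x ∈ Icc a b, HasDerivAt g (g' x) x) (hg' : IntervalIntegrable g' volume a b)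
    (hsign : (∀ x ∈ Icc a b, 0 ≤ g' x) ∨ ∀ x ∈ Icc a b, g' x ≤ 0) :
    ∫ x in a..b, |g' x| = |g b - g a| := by
  have hftc : ∫ x in a..b, g' x = g b - g a :=
    integral_eq_sub_of_hasDerivAt (by rwa [uIcc_of_le hab]) hg'
  rcases hsign with hnonneg | hnonpos
  · have h : ∫ x in a..b, |g' x| = ∫ x in a..b, g' x :=
      integral_congr fun x hx => abs_of_nonneg (hnonneg x (by rwa [uIcc_of_le hab] at hx))
    rw [h, ← hftc, abs_of_nonneg (integral_nonneg hab hnonneg)]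
  · have h : ∫ x in a..b, |g' x| = ∫ x in a..b, -g' x :=
      integral_congr fun x hx => abs_of_nonpos (hnonpos x (by rwa [uIcc_of_le hab] at hx))
    have hle : g b - g a ≤ 0 := by
      rw [← hftc, ← neg_nonneg, ← intervalIntegral.integral_neg]
      exact integral_nonneg hab fun x hx => neg_nonneg.2 (hnonpos x hx)
    rw [h, intervalIntegral.integral_neg, hftc, abs_of_nonpos hle]

end IntegrationByParts

theorem abs_integral_rpow_mul_le {γ ε M : ℝ} {v w : ℝ → ℝ} (hγ : 0 < γ) (hε₀ : 0 < ε)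
    (hε₁ : ε ≤ 1) (hw : Continuous w) (hw₁ : ∀ t, |w t| ≤ 1) (hv : ∀ t, HasDerivAt v (w t) t)
    (hM : ∀ t, |v t| ≤ M) :
    |∫ t in (0:ℝ)..1, t ^ (γ - 1) * w t| ≤ ε ^ γ / γ + 2 * M * (1 + ε ^ (γ - 1)) := by
  have hpow : ∀ {c d : ℝ}, IntervalIntegrable (fun t : ℝ => t ^ (γ - 1)) volume c d :=
    intervalIntegrable_rpow' (by linarith)
  have hint : ∀ {c d : ℝ}, IntervalIntegrable (fun t : ℝ => t ^ (γ - 1) * w t) volume c d :=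
    hpow.mul_continuousOn hw.continuousOn
  have hnear : |∫ t in (0:ℝ)..ε, t ^ (γ - 1) * w t| ≤ ε ^ γ / γ := by
    calc |∫ t in (0:ℝ)..ε, t ^ (γ - 1) * w t| ≤ ∫ t in (0:ℝ)..ε, t ^ (γ - 1) :=
          (abs_integral_le_integral_abs hε₀.le).trans <| integral_mono_on hε₀.le hint.abs hpow
            fun t ht => by
              rw [abs_mul, abs_of_nonneg (Real.rpow_nonneg ht.1 _)]
              exact mul_le_of_le_one_right (Real.rpow_nonneg ht.1 _) (hw₁ t)
      _ = ε ^ γ / γ := by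
          rw [integral_rpow (Or.inl (by linarith)), sub_add_cancel,
            Real.zero_rpow hγ.ne', sub_zero]
  have hderiv : ∀ t ∈ Icc ε 1, HasDerivAt (fun t : ℝ => t ^ (γ - 1))
      ((γ - 1) * t ^ (γ - 1 - 1)) t :=
    fun t ht => Real.hasDerivAt_rpow_const (Or.inl (hε₀.trans_le ht.1).ne')
  have hderiv_int : IntervalIntegrable (fun t : ℝ => (γ - 1) * t ^ (γ - 1 - 1)) volume ε 1 := by
    refine ContinuousOn.intervalIntegrable (continuousOn_const.mul ?_)
    rw [uIcc_of_le hε₁]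
    exact continuousOn_id.rpow_const fun t ht => Or.inl (hε₀.trans_le ht.1).ne'
  have hsign : (∀ t ∈ Icc ε 1, 0 ≤ (γ - 1) * t ^ (γ - 1 - 1)) ∨
      ∀ t ∈ Icc ε 1, (γ - 1) * t ^ (γ - 1 - 1) ≤ 0 := by
    rcases le_total 0 (γ - 1) with h | h
    · exact Or.inl fun t ht => mul_nonneg h (Real.rpow_nonneg (hε₀.le.trans ht.1) _)
    · exact Or.inr fun t ht =>
        mul_nonpos_of_nonpos_of_nonneg h (Real.rpow_nonneg (hε₀.le.trans ht.1) _)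
  have hε_pow : 0 ≤ ε ^ (γ - 1) := Real.rpow_nonneg hε₀.le _
  have hfar : |∫ t in ε..1, t ^ (γ - 1) * w t| ≤ 2 * M * (1 + ε ^ (γ - 1)) := by
    have h := abs_integral_mul_le_of_hasDerivAt hε₁ hderiv (fun t _ => hv t) hderiv_int
      (hw.intervalIntegrable _ _) (fun t _ => hM t)
    rw [integral_abs_deriv_eq_abs_sub hε₁ hderiv hderiv_int hsign, Real.one_rpow,
      abs_of_nonneg hε_pow, abs_one] at h
    have hM₀ : 0 ≤ M := (abs_nonneg _).trans (hM 0)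
    calc _ ≤ M * (ε ^ (γ - 1) + 1 + |1 - ε ^ (γ - 1)|) := h
      _ ≤ M * (ε ^ (γ - 1) + 1 + (1 + ε ^ (γ - 1))) := by
          gcongr
          exact (abs_sub _ _).trans (by rw [abs_one, abs_of_nonneg hε_pow])
      _ = 2 * M * (1 + ε ^ (γ - 1)) := by ring
  rw [← integral_add_adjacent_intervals hint hint]
  exact (abs_add_le _ _).trans (add_le_add hnear hfar)

theorem integral_ofReal_mul_cexp_of_even {f : ℝ → ℝ} (hf : Continuous f)
    (heven : ∀ x, f (-x) = f x) (a ξ : ℝ) :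
    ∫ x in -a..a, (f x : ℂ) * Complex.exp (-Complex.I * ξ * x) =
      2 * ((∫ x in (0:ℝ)..a, f x * Real.cos (ξ * x) : ℝ) : ℂ) := by
  set g : ℝ → ℂ := fun x => (f x : ℂ) * Complex.exp (-Complex.I * ξ * x) with hg_def
  have hg : Continuous g := by fun_prop
  have hneg : ∫ x in -a..0, g x = ∫ x in (0:ℝ)..a, g (-x) := by
    rw [integral_comp_neg, neg_zero]
  have hg_neg : IntervalIntegrable (fun x => g (-x)) volume 0 a :=
    (hg.comp continuous_neg).intervalIntegrable _ _
  rw [← integral_add_adjacent_intervals (hg.intervalIntegrable _ _) (hg.intervalIntegrable _ _),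
    hneg, ← integral_add hg_neg (hg.intervalIntegrable _ _), ← intervalIntegral.integral_ofReal,
    ← intervalIntegral.integral_const_mul]
  refine integral_congr fun x _ => ?_
  simp only [hg_def, heven, Complex.ofReal_mul, Complex.ofReal_cos, Complex.ofReal_neg]
  rw [← mul_add, mul_left_comm, Complex.two_cos]
  ring_nf

theorem le_two_rpow_mul_max_mul_one_add_abs_rpow_neg {F : ℝ → ℝ} {A B p : ℝ} (hA : 0 ≤ A)
    (hp : 0 ≤ p) (hsmall : ∀ ξ, |ξ| < 1 → F ξ ≤ A) (hlarge : ∀ ξ, 1 ≤ |ξ| → F ξ ≤ B * |ξ| ^ (-p))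
    (ξ : ℝ) : F ξ ≤ 2 ^ p * max A B * (1 + |ξ|) ^ (-p) := by
  have hmax : 0 ≤ max A B := hA.trans (le_max_left _ _)
  rcases lt_or_ge |ξ| 1 with hξ | hξ
  · have h : 1 ≤ 2 ^ p * (1 + |ξ|) ^ (-p) := by
      rw [Real.rpow_neg (by positivity), ← div_eq_mul_inv,
        one_le_div (Real.rpow_pos_of_pos (by positivity) _)]
      exact Real.rpow_le_rpow (by positivity) (by linarith) hp
    calc F ξ ≤ A := hsmall ξ hξ
      _ ≤ max A B := le_max_left _ _
      _ ≤ max A B * (2 ^ p * (1 + |ξ|) ^ (-p)) := le_mul_of_one_le_right hmax h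
      _ = _ := by ring
  · have h : |ξ| ^ (-p) ≤ 2 ^ p * (1 + |ξ|) ^ (-p) := by
      have h2 : (2 * |ξ|) ^ (-p) ≤ (1 + |ξ|) ^ (-p) :=
        Real.rpow_le_rpow_of_nonpos (by positivity) (by linarith) (by linarith)
      rw [Real.mul_rpow (by norm_num) (abs_nonneg ξ)] at h2
      calc |ξ| ^ (-p) = 2 ^ p * (2 ^ (-p) * |ξ| ^ (-p)) := by
            rw [← mul_assoc, ← Real.rpow_add (by norm_num), add_neg_cancel, Real.rpow_zero, one_mul]
        _ ≤ 2 ^ p * (1 + |ξ|) ^ (-p) := by gcongr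
    calc F ξ ≤ B * |ξ| ^ (-p) := hlarge ξ hξ
      _ ≤ max A B * |ξ| ^ (-p) := by gcongr; exact le_max_right _ _
      _ ≤ max A B * (2 ^ p * (1 + |ξ|) ^ (-p)) := by gcongr
      _ = _ := by ring

noncomputable def rieszKernel (γ y : ℝ) : ℝ := max 0 (1 - |y|) ^ γ

noncomputable def rieszCosIntegral (γ ξ : ℝ) : ℝ :=
  ∫ t in (0:ℝ)..1, t ^ γ * Real.cos (ξ * (1 - t))

theorem hasDerivAt_sin_mul_one_sub (ξ t : ℝ) :
    HasDerivAt (fun t => Real.sin (ξ * (1 - t))) (-(ξ * Real.cos (ξ * (1 - t)))) t := by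
  convert (((hasDerivAt_id' t).const_sub 1).const_mul ξ).sin using 1
  ring

theorem hasDerivAt_cos_mul_one_sub (ξ t : ℝ) :
    HasDerivAt (fun t => Real.cos (ξ * (1 - t))) (ξ * Real.sin (ξ * (1 - t))) t := by
  convert (((hasDerivAt_id' t).const_sub 1).const_mul ξ).cos using 1
  ring

theorem abs_rieszCosIntegral_le_one {γ : ℝ} (hγ : 0 ≤ γ) (ξ : ℝ) :
    |rieszCosIntegral γ ξ| ≤ 1 := by
  have h := norm_integral_le_of_norm_le_const (a := 0) (b := 1) (C := 1)
    (f := fun t : ℝ => t ^ γ * Real.cos (ξ * (1 - t))) fun t ht => by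
      rw [uIoc_of_le zero_le_one] at ht
      rw [Real.norm_eq_abs, abs_mul, abs_of_nonneg (Real.rpow_nonneg ht.1.le _)]
      exact mul_le_one₀ (Real.rpow_le_one ht.1.le ht.2 hγ) (abs_nonneg _) (Real.abs_cos_le_one _)
  simpa [rieszCosIntegral] using h

theorem rieszCosIntegral_eq_mul_integral_rpow_mul_sin {γ ξ : ℝ} (hγ : 0 < γ) (hξ : ξ ≠ 0) :
    rieszCosIntegral γ ξ = γ / ξ * ∫ t in (0:ℝ)..1, t ^ (γ - 1) * Real.sin (ξ * (1 - t)) := by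
  have hu : ∀ t ∈ Ioo (min 0 1) (max 0 1), HasDerivAt (fun t : ℝ => t ^ γ) (γ * t ^ (γ - 1)) t :=
    fun t ht => Real.hasDerivAt_rpow_const (Or.inl (by simpa using ht.1 : (0:ℝ) < t).ne')
  have hv : ∀ t ∈ Ioo (min 0 1) (max 0 1),
      HasDerivAt (fun t => -Real.sin (ξ * (1 - t)) / ξ) (Real.cos (ξ * (1 - t))) t := by
    intro t _
    exact ((hasDerivAt_sin_mul_one_sub ξ t).neg.div_const ξ).congr_deriv
      (by rw [neg_neg, mul_div_cancel_left₀ _ hξ])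
  rw [rieszCosIntegral, integral_mul_deriv_eq_deriv_mul_of_hasDerivAt
    (Real.continuous_rpow_const hγ.le).continuousOn
    (by fun_prop) hu hv ((intervalIntegrable_rpow' (by linarith)).const_mul γ)
    (Continuous.intervalIntegrable (by fun_prop) _ _)]
  rw [← intervalIntegral.integral_const_mul]
  simp only [sub_self, mul_zero, Real.sin_zero, neg_zero, zero_div, sub_zero,
    Real.zero_rpow hγ.ne', zero_mul, zero_sub]
  rw [← intervalIntegral.integral_neg]
  refine integral_congr fun t _ => ?_
  field_simp

theorem abs_integral_rpow_mul_sin_le {γ ξ : ℝ} (hγ : 0 < γ) (hξ : 1 ≤ |ξ|) :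
    |∫ t in (0:ℝ)..1, t ^ (γ - 1) * Real.sin (ξ * (1 - t))| ≤ (1 / γ + 4) * |ξ| ^ (-min 1 γ) := by
  set ε := |ξ|⁻¹ with hε
  have hξ₀ : 0 < |ξ| := one_pos.trans_le hξ
  have hε₀ : 0 < ε := inv_pos.2 hξ₀
  have hε₁ : ε ≤ 1 := inv_le_one_of_one_le₀ hξ
  have h := abs_integral_rpow_mul_le hγ hε₀ hε₁ (w := fun t => Real.sin (ξ * (1 - t)))
    (v := fun t => Real.cos (ξ * (1 - t)) / ξ) (M := ε) (by fun_prop)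
    (fun t => Real.abs_sin_le_one _)
    (fun t => ((hasDerivAt_cos_mul_one_sub ξ t).div_const ξ).congr_deriv
      (mul_div_cancel_left₀ _ (abs_pos.1 hξ₀)))
    (fun t => by
      rw [abs_div, hε, div_eq_mul_inv]
      exact mul_le_of_le_one_left (by positivity) (Real.abs_cos_le_one _))
  have hpow : ε ^ γ ≤ ε ^ min 1 γ := Real.rpow_le_rpow_of_exponent_ge hε₀ hε₁ (min_le_right _ _)
  have hone : ε ≤ ε ^ min 1 γ := by
    simpa using Real.rpow_le_rpow_of_exponent_ge hε₀ hε₁ (min_le_left 1 γ)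
  have hsplit : ε * ε ^ (γ - 1) = ε ^ γ := by
    rw [Real.rpow_sub_one hε₀.ne']
    field_simp
  rw [Real.rpow_neg hξ₀.le, ← Real.inv_rpow hξ₀.le]
  calc _ ≤ ε ^ γ / γ + 2 * ε * (1 + ε ^ (γ - 1)) := h
    _ = ε ^ γ / γ + 2 * ε + 2 * ε ^ γ := by rw [← hsplit]; ring
    _ ≤ ε ^ min 1 γ / γ + 2 * ε ^ min 1 γ + 2 * ε ^ min 1 γ := by gcongr
    _ = (1 / γ + 4) * ε ^ min 1 γ := by ring

theorem abs_rieszCosIntegral_le {γ ξ : ℝ} (hγ : 0 < γ) (hξ : 1 ≤ |ξ|) :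
    |rieszCosIntegral γ ξ| ≤ (1 + 4 * γ) * |ξ| ^ (-(min 1 γ + 1)) := by
  have hξ₀ : 0 < |ξ| := one_pos.trans_le hξ
  rw [rieszCosIntegral_eq_mul_integral_rpow_mul_sin hγ (abs_pos.1 hξ₀), abs_mul, abs_div,
    abs_of_pos hγ, neg_add, Real.rpow_add hξ₀, Real.rpow_neg_one]
  calc γ / |ξ| * |∫ t in (0:ℝ)..1, t ^ (γ - 1) * Real.sin (ξ * (1 - t))|
      ≤ γ / |ξ| * ((1 / γ + 4) * |ξ| ^ (-min 1 γ)) := by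
        gcongr
        exact abs_integral_rpow_mul_sin_le hγ hξ
    _ = (1 + 4 * γ) * (|ξ| ^ (-min 1 γ) * |ξ|⁻¹) := by field_simp

theorem continuous_rieszKernel {γ : ℝ} (hγ : 0 ≤ γ) : Continuous (rieszKernel γ) :=
  (continuous_const.max (continuous_const.sub continuous_abs)).rpow_const fun _ => Or.inr hγ

theorem rieszKernel_eq_zero {γ y : ℝ} (hγ : 0 < γ) (hy : 1 ≤ |y|) : rieszKernel γ y = 0 := by
  rw [rieszKernel, max_eq_left (by linarith), Real.zero_rpow hγ.ne']

theorem integral_rieszKernel_mul_cos (γ ξ : ℝ) :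
    ∫ x in (0:ℝ)..1, rieszKernel γ x * Real.cos (ξ * x) = rieszCosIntegral γ ξ := by
  have h := integral_comp_sub_left (fun t : ℝ => t ^ γ * Real.cos (ξ * (1 - t))) (a := 0) (b := 1) 1
  rw [sub_self, sub_zero] at h
  rw [rieszCosIntegral, ← h]
  refine integral_congr fun x hx => ?_
  rw [uIcc_of_le zero_le_one] at hx
  simp only [rieszKernel, abs_of_nonneg hx.1, max_eq_right (sub_nonneg.2 hx.2), sub_sub_cancel]

theorem FT_rieszKernel {γ : ℝ} (hγ : 0 < γ) (ξ : ℝ) :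
    FT (fun y => (rieszKernel γ y : ℂ)) ξ = ((rieszCosIntegral γ ξ / Real.pi : ℝ) : ℂ) := by
  have hsupp : ∀ y ∉ Ioc (-1 : ℝ) 1,
      (rieszKernel γ y : ℂ) * Complex.exp (-Complex.I * ξ * y) = 0 := by
    intro y hy
    rw [rieszKernel_eq_zero hγ, Complex.ofReal_zero, zero_mul]
    rw [mem_Ioc, not_and_or, not_lt, not_le] at hy
    rcases hy with hy | hy
    · exact le_abs.2 (Or.inr (by linarith))
    · exact le_abs.2 (Or.inl hy.le)
  rw [FT, ← setIntegral_eq_integral_of_forall_compl_eq_zero hsupp, ← integral_of_le (by norm_num),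
    integral_ofReal_mul_cexp_of_even (continuous_rieszKernel hγ.le)
      (fun y => by simp [rieszKernel]),
    integral_rieszKernel_mul_cos]
  push_cast
  field_simp

/-- For `γ > 0` and `φ_γ(x) = max(0, 1-|x|)^γ`, there is `c(γ) > 0` with
`|φ̂_γ(x)| ≤ c(γ) (1+|x|)^{-min(1,γ)-1}` for all `x`. -/
theorem riesz_kernel_fourier_decay (γ : ℝ) (hγ : 0 < γ) :
    ∃ c : ℝ, 0 < c ∧ ∀ x : ℝ,
      ‖FT (fun y : ℝ => ((max 0 (1 - |y|) ^ γ : ℝ) : ℂ)) x‖ ≤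
        c * (1 + |x|) ^ (-(min 1 γ) - 1) := by
  have hnorm : ∀ ξ, ‖FT (fun y => (rieszKernel γ y : ℂ)) ξ‖ = |rieszCosIntegral γ ξ| / Real.pi :=
    fun ξ => by
      rw [FT_rieszKernel hγ, Complex.norm_real, Real.norm_eq_abs, abs_div,
        abs_of_pos Real.pi_pos]
  have hexp : -(min 1 γ) - 1 = -(min 1 γ + 1) := by ring
  refine ⟨2 ^ (min 1 γ + 1) * max (1 / Real.pi) ((1 + 4 * γ) / Real.pi),
    mul_pos (by positivity) (lt_max_of_lt_left (by positivity)), fun ξ => ?_⟩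
  rw [hexp]
  refine le_two_rpow_mul_max_mul_one_add_abs_rpow_neg
    (F := fun ξ => ‖FT (fun y => (rieszKernel γ y : ℂ)) ξ‖) (by positivity) (by positivity)
    (fun ξ _ => ?_) (fun ξ hξ => ?_) ξ
  · rw [hnorm]
    gcongr
    exact abs_rieszCosIntegral_le_one hγ.le ξ
  · rw [hnorm, div_mul_eq_mul_div]
    gcongr
    exact abs_rieszCosIntegral_le hγ hξ
end

section
/- Suppose S = (σ_{kn})_{k,n≥0} is an infinite matrix which is a Schur multiplier on ℓ² (i.e., entrywise multiplication by S maps bounded operators on ℓ² to bounded operators on ℓ²), and suppose both iterated limits ℓ₁ = lim_k lim_n σ_{kn} and ℓ₂ = lim_n lim_k σ_{kn} exist. Then ℓ₁ = ℓ₂. -/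
open scoped BigOperators

/-- `MatBound p A C` : the matrix `A` (row index first), acting on finitely supported
sequences, is bounded on `ℓ^p` with norm at most `C`. -/
noncomputable def MatBound (p : ℝ) (A : ℕ → ℕ → ℂ) (C : ℝ) : Prop :=
  ∀ x : ℕ →₀ ℂ,
    Summable (fun n : ℕ => ‖∑ k ∈ x.support, A n k * x k‖ ^ p) ∧
    ∑' n : ℕ, ‖∑ k ∈ x.support, A n k * x k‖ ^ p ≤
      C ^ p * ∑ k ∈ x.support, ‖x k‖ ^ p

/-- The matrix `A` represents a bounded operator on `ℓ^p`. -/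
noncomputable def IsBoundedOn (p : ℝ) (A : ℕ → ℕ → ℂ) : Prop :=
  ∃ C : ℝ, 0 ≤ C ∧ MatBound p A C

/-- `S` is a Schur multiplier on `ℓ^p`. -/
noncomputable def IsSchurMult (p : ℝ) (S : ℕ → ℕ → ℂ) : Prop :=
  ∀ A : ℕ → ℕ → ℂ, IsBoundedOn p A → IsBoundedOn p (fun n k => S n k * A n k)

/-- A matrix is lower triangular if its entries vanish above the main diagonal. -/
def LowerTri (A : ℕ → ℕ → ℂ) : Prop := ∀ n k : ℕ, n < k → A n k = 0

/-- `S` is a Schur multiplier for lower triangular matrices on `ℓ^p`. -/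
noncomputable def IsSchurMultLT (p : ℝ) (S : ℕ → ℕ → ℂ) : Prop :=
  ∀ A : ℕ → ℕ → ℂ, LowerTri A → IsBoundedOn p A →
    IsBoundedOn p (fun n k => S n k * A n k)

/-!
Pass to subsequences of rows `k i` and columns `n j` along which `S` is close to `ℓ₁` on and
above the diagonal and close to `ℓ₂` below it. The matrix carrying `1 / (i - j)` at position
`(k i, n j)` is bounded by Hilbert's inequality (with norm at most `π`, since the `1 / m` are the
Fourier coefficients of the sawtooth `i (θ - π)` on `[0, 2π]`), so its Schur product with `S` is
bounded as well. But on the indicator of the first `3M` columns, each of the rows `M ≤ i < 2M` of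
that product has norm about `‖ℓ₁ - ℓ₂‖ log M`, since the two one-sided harmonic sums no longer
cancel; `M` such rows are incompatible with an operator bound `C`.
-/

open Filter Finset Complex Function
open scoped Real ComplexConjugate Topology

noncomputable section

namespace SchurIteratedLimits

def trigPoly (s : Finset ℕ) (c : ℕ → ℂ) (θ : ℝ) : ℂ :=
  ∑ j ∈ s, c j * cexp (j * θ * I)

@[fun_prop]
lemma continuous_trigPoly (s : Finset ℕ) (c : ℕ → ℂ) : Continuous (trigPoly s c) := by
  unfold trigPoly; fun_prop

lemma cexp_int_mul_ofReal_two_pi_mul_I (m : ℤ) : cexp (m * ((2 * π : ℝ) : ℂ) * I) = 1 := by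
  rw [← exp_int_mul_two_pi_mul_I m]; push_cast; ring_nf

lemma integral_cexp_int_mul (m : ℤ) :
    ∫ θ in (0 : ℝ)..2 * π, cexp (m * θ * I) = if m = 0 then (2 * π : ℂ) else 0 := by
  split_ifs with hm
  · simp [hm]
  have hc : (m : ℂ) * I ≠ 0 := by simp [hm, I_ne_zero]
  simp_rw [mul_right_comm _ _ I]
  rw [integral_exp_mul_complex hc, mul_right_comm, cexp_int_mul_ofReal_two_pi_mul_I]
  simp

/- At `m = 0` both sides vanish, the right one through `0⁻¹ = 0`; so the Hilbert matrix below may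
keep its diagonal entries `(i - i)⁻¹ = 0`. -/
lemma integral_sawtooth_mul_cexp (m : ℤ) :
    ∫ θ in (0 : ℝ)..2 * π, I * (θ - π) * cexp (m * θ * I) = 2 * π * (m : ℂ)⁻¹ := by
  rcases eq_or_ne m 0 with rfl | hm
  · simp only [Int.cast_zero, zero_mul, Complex.exp_zero, mul_one, inv_zero, mul_zero]
    rw [intervalIntegral.integral_const_mul, intervalIntegral.integral_sub
      (Continuous.intervalIntegrable (by fun_prop) _ _) intervalIntegrable_const,
      intervalIntegral.integral_ofReal, integral_id]
    simp only [ne_eq, OfNat.ofNat_ne_zero, not_false_eq_true, zero_pow, sub_zero, ofReal_div,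
      ofReal_pow, ofReal_mul, ofReal_ofNat, intervalIntegral.integral_const, real_smul, mul_eq_zero,
      I_ne_zero, false_or]
    ring
  have hm' : (m : ℂ) ≠ 0 := Int.cast_ne_zero.2 hm
  have hF : ∀ θ : ℝ, HasDerivAt (fun t : ℝ => cexp (m * t * I) * ((t - π) / m + I / m ^ 2))
      (I * (θ - π) * cexp (m * θ * I)) θ := by
    intro θ
    have h1 : HasDerivAt (fun t : ℝ => (m : ℂ) * t * I) (m * I) θ := by
      simpa using ((hasDerivAt_id θ).ofReal_comp.const_mul (m : ℂ)).mul_const I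
    have h2 : HasDerivAt (fun t : ℝ => ((t : ℂ) - π) / m + I / m ^ 2) (1 / m) θ := by
      simpa using (((hasDerivAt_id θ).ofReal_comp.sub_const (π : ℂ)).div_const (m : ℂ)).add_const
        (I / (m : ℂ) ^ 2)
    refine (h1.cexp.mul h2).congr_deriv ?_
    field_simp
    ring_nf
    simp only [I_sq]
    ring
  rw [intervalIntegral.integral_eq_sub_of_hasDerivAt (fun θ _ => hF θ)
    (Continuous.intervalIntegrable (by fun_prop) _ _), cexp_int_mul_ofReal_two_pi_mul_I]
  push_cast
  simp only [one_mul, mul_zero, zero_mul, exp_zero, zero_sub, add_sub_add_right_eq_sub]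
  field_simp
  ring

lemma integral_mul_trigPoly_mul_conj {w : ℝ → ℂ} (hw : Continuous w) (s t : Finset ℕ)
    (p q : ℕ → ℂ) :
    ∫ θ in (0 : ℝ)..2 * π, w θ * (trigPoly s p θ * conj (trigPoly t q θ)) =
      ∑ i ∈ s, ∑ j ∈ t, p i * conj (q j) *
        ∫ θ in (0 : ℝ)..2 * π, w θ * cexp ((i - j : ℤ) * θ * I) := by
  have hexpand : ∀ θ : ℝ, w θ * (trigPoly s p θ * conj (trigPoly t q θ)) =
      ∑ i ∈ s, ∑ j ∈ t, p i * conj (q j) * (w θ * cexp ((i - j : ℤ) * θ * I)) := by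
    intro θ
    rw [trigPoly, trigPoly, map_sum, sum_mul_sum, mul_sum]
    refine sum_congr rfl fun i _ => ?_
    rw [mul_sum]
    refine sum_congr rfl fun j _ => ?_
    have : cexp (i * θ * I) * conj (cexp (j * θ * I)) = cexp ((i - j : ℤ) * θ * I) := by
      rw [← exp_conj, ← Complex.exp_add]
      congr 1
      simp only [map_mul, conj_ofReal, map_natCast, conj_I]
      push_cast
      ring
    rw [← this, map_mul]; ring
  simp_rw [hexpand]
  rw [intervalIntegral.integral_finsetSum fun i _ =>
    Continuous.intervalIntegrable (by fun_prop) _ _]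
  refine sum_congr rfl fun i _ => ?_
  rw [intervalIntegral.integral_finsetSum fun j _ =>
    Continuous.intervalIntegrable (by fun_prop) _ _]
  simp_rw [intervalIntegral.integral_const_mul]

lemma integral_norm_trigPoly_sq (s : Finset ℕ) (c : ℕ → ℂ) :
    ∫ θ in (0 : ℝ)..2 * π, ‖trigPoly s c θ‖ ^ 2 = 2 * π * ∑ j ∈ s, ‖c j‖ ^ 2 := by
  apply Complex.ofReal_injective
  have h := integral_mul_trigPoly_mul_conj continuous_const s s c c (w := 1)
  simp only [Pi.one_apply, one_mul, integral_cexp_int_mul, sub_eq_zero, Nat.cast_inj, mul_ite,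
    mul_zero, sum_ite_eq] at h
  rw [← intervalIntegral.integral_ofReal]
  push_cast
  simp_rw [← mul_conj', h, mul_sum]
  exact sum_congr rfl fun j hj => by rw [if_pos hj, mul_comm]

lemma hilbert_inequality (s t : Finset ℕ) (y : ℕ → ℂ) :
    ∑ i ∈ s, ‖∑ j ∈ t, ((i : ℂ) - j)⁻¹ * y j‖ ^ 2 ≤ π ^ 2 * ∑ j ∈ t, ‖y j‖ ^ 2 := by
  set r : ℕ → ℂ := fun i => ∑ j ∈ t, ((i : ℂ) - j)⁻¹ * y j
  set P := trigPoly s fun i => conj (r i)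
  set Q := trigPoly t fun j => conj (y j)
  have hPQ : ∫ θ in (0 : ℝ)..2 * π, I * (θ - π) * (P θ * conj (Q θ)) =
      2 * π * ∑ i ∈ s, ‖r i‖ ^ 2 := by
    rw [integral_mul_trigPoly_mul_conj (by fun_prop)]
    simp_rw [integral_sawtooth_mul_cexp, conj_conj]
    push_cast
    simp_rw [mul_sum, ← mul_conj', mul_comm (r _)]
    refine sum_congr rfl fun i _ => ?_
    rw [mul_sum, mul_sum]
    refine sum_congr rfl fun j _ => ?_
    ring
  have hP : ∫ θ in (0 : ℝ)..2 * π, ‖P θ‖ ^ 2 = 2 * π * ∑ i ∈ s, ‖r i‖ ^ 2 := by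
    simp_rw [P, integral_norm_trigPoly_sq, norm_conj]
  have hQ : ∫ θ in (0 : ℝ)..2 * π, ‖Q θ‖ ^ 2 = 2 * π * ∑ j ∈ t, ‖y j‖ ^ 2 := by
    simp_rw [Q, integral_norm_trigPoly_sq, norm_conj]
  have hpoint : ∀ θ ∈ Set.Ioc 0 (2 * π), ‖I * (θ - π) * (P θ * conj (Q θ))‖ ≤
      (‖P θ‖ ^ 2 + π ^ 2 * ‖Q θ‖ ^ 2) / 2 := by
    -- AM-GM: `π ‖P‖ ‖Q‖ ≤ (‖P‖² + π² ‖Q‖²) / 2`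
    rintro θ ⟨h0, h2π⟩
    have hθ : |θ - π| ≤ π := abs_le.2 ⟨by linarith, by linarith⟩
    rw [norm_mul, norm_mul, norm_mul, norm_I, norm_conj, ← ofReal_sub, norm_real,
      Real.norm_eq_abs, one_mul]
    nlinarith [sq_nonneg (‖P θ‖ - π * ‖Q θ‖), mul_nonneg (norm_nonneg (P θ)) (norm_nonneg (Q θ)),
      abs_nonneg (θ - π)]
  have hbound : 2 * π * ∑ i ∈ s, ‖r i‖ ^ 2 ≤
      (2 * π * ∑ i ∈ s, ‖r i‖ ^ 2 + π ^ 2 * (2 * π * ∑ j ∈ t, ‖y j‖ ^ 2)) / 2 := by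
    calc 2 * π * ∑ i ∈ s, ‖r i‖ ^ 2
        = ‖∫ θ in (0 : ℝ)..2 * π, I * (θ - π) * (P θ * conj (Q θ))‖ := by
          rw [hPQ, ← ofReal_ofNat, ← ofReal_mul, ← ofReal_mul, norm_real,
            Real.norm_of_nonneg (by positivity)]
      _ ≤ ∫ θ in (0 : ℝ)..2 * π, (‖P θ‖ ^ 2 + π ^ 2 * ‖Q θ‖ ^ 2) / 2 :=
          intervalIntegral.norm_integral_le_of_norm_le (by positivity)
            (Eventually.of_forall hpoint) (Continuous.intervalIntegrable (by fun_prop) _ _)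
      _ = _ := by
          rw [intervalIntegral.integral_div, intervalIntegral.integral_add
            (Continuous.intervalIntegrable (by fun_prop) _ _)
            (Continuous.intervalIntegrable (by fun_prop) _ _),
            intervalIntegral.integral_const_mul, hP, hQ]
  nlinarith [Real.pi_pos]

lemma MatBound.sum_sq_le {A : ℕ → ℕ → ℂ} {C : ℝ} (h : MatBound 2 A C) (x : ℕ →₀ ℂ)
    {u : Finset ℕ} (hu : x.support ⊆ u) (s : Finset ℕ) :
    ∑ r ∈ s, ‖∑ c ∈ u, A r c * x c‖ ^ 2 ≤ C ^ 2 * ∑ c ∈ u, ‖x c‖ ^ 2 := by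
  have hx : ∀ c ∈ u, c ∉ x.support → x c = 0 := fun c _ hc => Finsupp.notMem_support_iff.1 hc
  have hrow : ∀ r, ∑ c ∈ x.support, A r c * x c = ∑ c ∈ u, A r c * x c := fun r =>
    sum_subset hu fun c hc hc' => by simp [hx c hc hc']
  rw [← sum_subset hu fun c hc hc' => by simp [hx c hc hc']]
  simp_rw [← hrow]
  obtain ⟨hsum, hle⟩ := h x
  simp only [Real.rpow_two] at hsum hle
  exact (hsum.sum_le_tsum s fun _ _ => by positivity).trans hle

lemma matBound_two_of_sum_sq_le {A : ℕ → ℕ → ℂ} {C : ℝ}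
    (h : ∀ (x : ℕ →₀ ℂ) (s : Finset ℕ),
      ∑ r ∈ s, ‖∑ c ∈ x.support, A r c * x c‖ ^ 2 ≤ C ^ 2 * ∑ c ∈ x.support, ‖x c‖ ^ 2) :
    MatBound 2 A C := by
  intro x
  simp only [Real.rpow_two]
  have hsum := summable_of_sum_le (fun _ => by positivity) (h x)
  exact ⟨hsum, hsum.tsum_le_of_sum_le (h x)⟩

open Classical in
def embedMatrix (k n : ℕ → ℕ) (H : ℕ → ℕ → ℂ) (r c : ℕ) : ℂ :=
  if r ∈ Set.range k ∧ c ∈ Set.range n then H (invFun k r) (invFun n c) else 0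

section embedMatrix

variable {k n : ℕ → ℕ} {H : ℕ → ℕ → ℂ}

lemma embedMatrix_apply_apply (hk : Injective k) (hn : Injective n) (i j : ℕ) :
    embedMatrix k n H (k i) (n j) = H i j := by
  simp [embedMatrix, leftInverse_invFun hk i, leftInverse_invFun hn j]

lemma embedMatrix_of_notMem_range_left {r : ℕ} (hr : r ∉ Set.range k) (c : ℕ) :
    embedMatrix k n H r c = 0 := by
  simp [embedMatrix, hr]

lemma embedMatrix_of_notMem_range_right (r : ℕ) {c : ℕ} (hc : c ∉ Set.range n) :
    embedMatrix k n H r c = 0 := by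
  simp [embedMatrix, hc]

lemma mul_embedMatrix (S : ℕ → ℕ → ℂ) :
    (fun r c => S r c * embedMatrix k n H r c) =
      embedMatrix k n fun i j => S (k i) (n j) * H i j := by
  ext r c
  unfold embedMatrix
  split_ifs with h
  · show S r c * _ = S (k (invFun k r)) (n (invFun n c)) * _
    rw [invFun_eq h.1, invFun_eq h.2]
  · rw [mul_zero]

lemma sum_embedMatrix_mul (hk : Injective k) (hn : Injective n) (i : ℕ) (u : Finset ℕ)
    (x : ℕ → ℂ) :
    ∑ c ∈ u, embedMatrix k n H (k i) c * x c =
      ∑ j ∈ u.preimage n hn.injOn, H i j * x (n j) := by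
  rw [← sum_preimage n u hn.injOn _ fun c _ hc => by
    rw [embedMatrix_of_notMem_range_right _ hc, zero_mul]]
  simp_rw [embedMatrix_apply_apply hk hn]

lemma matBound_embedMatrix_iff (hk : Injective k) (hn : Injective n) (C : ℝ) :
    MatBound 2 (embedMatrix k n H) C ↔ ∀ (s t : Finset ℕ) (y : ℕ → ℂ),
      ∑ i ∈ s, ‖∑ j ∈ t, H i j * y j‖ ^ 2 ≤ C ^ 2 * ∑ j ∈ t, ‖y j‖ ^ 2 := by
  constructor
  · intro h s t y
    let x := Finsupp.indicator (t.image n) fun c _ => y (invFun n c)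
    have hxn : ∀ j ∈ t, x (n j) = y j := fun j hj => by
      simp [x, Finsupp.indicator_of_mem (mem_image_of_mem n hj), leftInverse_invFun hn j]
    have hrow : ∀ i, ∑ c ∈ t.image n, embedMatrix k n H (k i) c * x c = ∑ j ∈ t, H i j * y j :=
      fun i => by
        rw [sum_image hn.injOn]
        exact sum_congr rfl fun j hj => by rw [embedMatrix_apply_apply hk hn, hxn j hj]
    have := MatBound.sum_sq_le h x (Finsupp.support_indicator_subset _ _) (s.image k)
    rw [sum_image hk.injOn, sum_image hn.injOn,
      sum_congr rfl fun j hj => congrArg (‖·‖ ^ 2) (hxn j hj)] at this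
    simpa only [hrow] using this
  · intro h
    refine matBound_two_of_sum_sq_le fun x s => ?_
    let t := x.support.preimage n hn.injOn
    calc ∑ r ∈ s, ‖∑ c ∈ x.support, embedMatrix k n H r c * x c‖ ^ 2
        = ∑ i ∈ s.preimage k hk.injOn, ‖∑ j ∈ t, H i j * x (n j)‖ ^ 2 := by
          rw [← sum_preimage k s hk.injOn _ fun r _ hr => by
            simp [embedMatrix_of_notMem_range_left hr]]
          simp_rw [sum_embedMatrix_mul hk hn]
          rfl
      _ ≤ C ^ 2 * ∑ j ∈ t, ‖x (n j)‖ ^ 2 := h _ _ _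
      _ ≤ C ^ 2 * ∑ c ∈ x.support, ‖x c‖ ^ 2 := by
          gcongr
          rw [← sum_image (f := fun c => ‖x c‖ ^ 2) hn.injOn]
          refine sum_le_sum_of_subset_of_nonneg (fun c hc => ?_) fun _ _ _ => by positivity
          obtain ⟨j, hj, rfl⟩ := mem_image.1 hc
          exact mem_preimage.1 hj

end embedMatrix

lemma monotone_harmonic : Monotone harmonic :=
  monotone_nat_of_le_succ fun n => by
    rw [harmonic_succ]; exact le_add_of_nonneg_right (by positivity)

lemma harmonic_two_mul_le (M : ℕ) : harmonic (2 * M) ≤ harmonic M + 1 := by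
  have hsplit := sum_range_add_sum_Ico (fun i : ℕ => ((i + 1 : ℕ) : ℚ)⁻¹) (by omega : M ≤ 2 * M)
  rw [← harmonic, ← harmonic] at hsplit
  have htail : ∑ i ∈ Ico M (2 * M), ((i + 1 : ℕ) : ℚ)⁻¹ ≤ M * ((M + 1 : ℕ) : ℚ)⁻¹ := by
    have := sum_le_card_nsmul (Ico M (2 * M)) (fun i : ℕ => ((i + 1 : ℕ) : ℚ)⁻¹)
      ((M + 1 : ℕ) : ℚ)⁻¹ fun i hi => by have := (mem_Ico.1 hi).1; gcongr
    simpa [show 2 * M - M = M by omega] using this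
  have hM : (M : ℚ) * ((M + 1 : ℕ) : ℚ)⁻¹ ≤ 1 := by
    rw [← div_eq_mul_inv, div_le_one (by positivity)]; push_cast; linarith
  linarith

lemma tendsto_harmonic_atTop : Tendsto (fun n => (harmonic n : ℝ)) atTop atTop := by
  simpa [harmonic, one_div] using Real.tendsto_sum_range_one_div_nat_succ_atTop

lemma sum_range_inv_sub (i : ℕ) : ∑ j ∈ range i, ((i : ℝ) - j)⁻¹ = harmonic i := by
  rw [← sum_range_reflect, harmonic]
  push_cast
  refine sum_congr rfl fun j hj => ?_
  have hj := mem_range.1 hj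
  rw [Nat.cast_sub (by omega), Nat.cast_sub (by omega)]
  push_cast
  ring_nf

lemma sum_Ico_inv_sub (i N : ℕ) : ∑ j ∈ Ico i N, ((i : ℝ) - j)⁻¹ = -harmonic (N - 1 - i) := by
  rw [sum_Ico_eq_sum_range]
  obtain h | h : N - i = 0 ∨ N - i = N - 1 - i + 1 := by omega
  · simp [h, show N - 1 - i = 0 by omega]
  · rw [h, sum_range_succ', harmonic]
    push_cast
    simp only [add_zero, sub_self, inv_zero, ← sum_neg_distrib]
    exact sum_congr rfl fun t _ => by rw [← inv_neg]; ring_nf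

lemma norm_sum_mul_sub_mul_sum_le {ι : Type*} {s : Finset ι} {σ v : ι → ℂ} {a : ℂ} {δ : ℝ}
    (h : ∀ j ∈ s, ‖σ j - a‖ ≤ δ) :
    ‖∑ j ∈ s, σ j * v j - a * ∑ j ∈ s, v j‖ ≤ δ * ∑ j ∈ s, ‖v j‖ := by
  rw [mul_sum, ← sum_sub_distrib, mul_sum]
  refine (norm_sum_le _ _).trans (sum_le_sum fun j hj => ?_)
  rw [← sub_mul, norm_mul]
  exact mul_le_mul_of_nonneg_right (h j hj) (norm_nonneg _)

lemma norm_sum_mul_inv_sub_sub_le {σ : ℕ → ℂ} {a b : ℂ} {δ : ℝ} {i N : ℕ} (hiN : i ≤ N)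
    (hlow : ∀ j < i, ‖σ j - b‖ ≤ δ) (hup : ∀ j, i ≤ j → ‖σ j - a‖ ≤ δ) :
    ‖∑ j ∈ range N, σ j * ((i : ℂ) - j)⁻¹ -
        (b * (harmonic i : ℝ) - a * (harmonic (N - 1 - i) : ℝ))‖ ≤
      δ * (harmonic i + harmonic (N - 1 - i)) := by
  have hv : ∀ j : ℕ, ((i : ℂ) - j)⁻¹ = (((i : ℝ) - j)⁻¹ : ℝ) := fun j => by push_cast; rfl
  have hlowSum : ∑ j ∈ range i, ((i : ℂ) - j)⁻¹ = (harmonic i : ℝ) := by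
    simp_rw [hv, ← ofReal_sum, sum_range_inv_sub]
  have hupSum : ∑ j ∈ Ico i N, ((i : ℂ) - j)⁻¹ = -((harmonic (N - 1 - i) : ℝ) : ℂ) := by
    simp_rw [hv, ← ofReal_sum, sum_Ico_inv_sub, ofReal_neg]
  have hlowNorm : ∑ j ∈ range i, ‖((i : ℂ) - j)⁻¹‖ = harmonic i := by
    simp_rw [hv, norm_real, Real.norm_eq_abs]
    rw [← sum_range_inv_sub]
    refine sum_congr rfl fun j hj => abs_of_pos ?_
    have : (j : ℝ) < i := by simpa using hj
    exact inv_pos.2 (by linarith)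
  have hupNorm : ∑ j ∈ Ico i N, ‖((i : ℂ) - j)⁻¹‖ = harmonic (N - 1 - i) := by
    simp_rw [hv, norm_real, Real.norm_eq_abs]
    rw [← neg_neg (harmonic (N - 1 - i) : ℝ), ← sum_Ico_inv_sub, ← sum_neg_distrib]
    refine sum_congr rfl fun j hj => abs_of_nonpos ?_
    have : (i : ℝ) ≤ j := by simpa using (mem_Ico.1 hj).1
    exact inv_nonpos.2 (by linarith)
  rw [← sum_range_add_sum_Ico _ hiN]
  calc _ = ‖(∑ j ∈ range i, σ j * ((i : ℂ) - j)⁻¹ - b * ∑ j ∈ range i, ((i : ℂ) - j)⁻¹) +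
          (∑ j ∈ Ico i N, σ j * ((i : ℂ) - j)⁻¹ - a * ∑ j ∈ Ico i N, ((i : ℂ) - j)⁻¹)‖ := by
        rw [hlowSum, hupSum]; congr 1; ring
    _ ≤ δ * ∑ j ∈ range i, ‖((i : ℂ) - j)⁻¹‖ + δ * ∑ j ∈ Ico i N, ‖((i : ℂ) - j)⁻¹‖ :=
        (norm_add_le _ _).trans <| add_le_add
          (norm_sum_mul_sub_mul_sum_le fun j hj => hlow j (mem_range.1 hj))
          (norm_sum_mul_sub_mul_sum_le fun j hj => hup j (mem_Ico.1 hj).1)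
    _ = _ := by rw [hlowNorm, hupNorm, mul_add]

lemma le_norm_sum_mul_inv_sub {σ : ℕ → ℂ} {a b : ℂ} {i M : ℕ} (hMi : M ≤ i) (hi : i < 2 * M)
    (hlow : ∀ j < i, ‖σ j - b‖ ≤ ‖a - b‖ / 4) (hup : ∀ j, i ≤ j → ‖σ j - a‖ ≤ ‖a - b‖ / 4) :
    ‖a - b‖ / 2 * harmonic M - ‖a‖ - ‖a - b‖ / 2 ≤
      ‖∑ j ∈ range (3 * M), σ j * ((i : ℂ) - j)⁻¹‖ := by
  have herr := norm_sum_mul_inv_sub_sub_le (N := 3 * M) (by omega) hlow hup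
  set H₁ : ℝ := (harmonic i : ℝ)
  set H₂ : ℝ := (harmonic (3 * M - 1 - i) : ℝ)
  set row := ∑ j ∈ range (3 * M), σ j * ((i : ℂ) - j)⁻¹
  have hbounds : ∀ m, M ≤ m → m ≤ 2 * M → (harmonic M : ℝ) ≤ harmonic m ∧
      (harmonic m : ℝ) ≤ harmonic M + 1 := fun m h₁ h₂ =>
    ⟨by exact_mod_cast monotone_harmonic h₁,
      by exact_mod_cast (monotone_harmonic h₂).trans (harmonic_two_mul_le M)⟩
  obtain ⟨h₁M, h₁M'⟩ := hbounds i hMi hi.le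
  obtain ⟨h₂M, h₂M'⟩ := hbounds (3 * M - 1 - i) (by omega) (by omega)
  have hH₁ : 0 ≤ H₁ := by
    simpa [H₁] using (Rat.cast_le (K := ℝ)).2 (monotone_harmonic (Nat.zero_le i))
  have hmain : ‖a - b‖ * H₁ - ‖a‖ ≤ ‖b * H₁ - a * H₂‖ := by
    have hdiff : ‖a * ((H₁ - H₂ : ℝ) : ℂ)‖ ≤ ‖a‖ := by
      rw [norm_mul, norm_real, Real.norm_eq_abs]
      exact mul_le_of_le_one_right (norm_nonneg a) (abs_le.2 ⟨by linarith, by linarith⟩)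
    calc ‖a - b‖ * H₁ - ‖a‖ ≤ ‖(a - b) * H₁‖ - ‖a * ((H₁ - H₂ : ℝ) : ℂ)‖ := by
          rw [norm_mul, norm_real, Real.norm_of_nonneg hH₁]; linarith
      _ ≤ ‖(a - b) * H₁ - a * ((H₁ - H₂ : ℝ) : ℂ)‖ := norm_sub_norm_le _ _
      _ = ‖b * H₁ - a * H₂‖ := by rw [← norm_neg]; congr 1; push_cast; ring
  have htri : ‖b * H₁ - a * H₂‖ - ‖row‖ ≤ ‖row - (b * H₁ - a * H₂)‖ :=
    (norm_sub_norm_le _ _).trans_eq (norm_sub_rev _ _)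
  have h₁ : ‖a - b‖ * harmonic M ≤ ‖a - b‖ * H₁ := by gcongr
  have h₂ : ‖a - b‖ / 4 * (H₁ + H₂) ≤ ‖a - b‖ / 4 * (2 * (harmonic M + 1)) := by
    gcongr; linarith
  linarith

lemma not_forall_sum_sq_le {σ : ℕ → ℕ → ℂ} {a b : ℂ} (hab : a ≠ b)
    (hup : ∀ i j, i ≤ j → dist (σ i j) a ≤ ‖a - b‖ / 4)
    (hlow : ∀ i j, j < i → dist (σ i j) b ≤ ‖a - b‖ / 4) (C : ℝ) :
    ¬ ∀ (s t : Finset ℕ) (y : ℕ → ℂ),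
      ∑ i ∈ s, ‖∑ j ∈ t, σ i j * ((i : ℂ) - j)⁻¹ * y j‖ ^ 2 ≤ C ^ 2 * ∑ j ∈ t, ‖y j‖ ^ 2 := by
  intro h
  let lb : ℕ → ℝ := fun M => ‖a - b‖ / 2 * harmonic M - ‖a‖ - ‖a - b‖ / 2
  have hlb : Tendsto lb atTop atTop := tendsto_atTop_add_const_right _ _ <|
    tendsto_atTop_add_const_right _ _ <| tendsto_harmonic_atTop.const_mul_atTop <|
      half_pos (norm_pos_iff.2 (sub_ne_zero.2 hab))
  obtain ⟨M, hM, hMC⟩ := ((eventually_ge_atTop 1).and (hlb.eventually_gt_atTop (2 * |C|))).exists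
  have hrow : ∀ i ∈ Ico M (2 * M),
      lb M ^ 2 ≤ ‖∑ j ∈ range (3 * M), σ i j * ((i : ℂ) - j)⁻¹ * (1 : ℕ → ℂ) j‖ ^ 2 := by
    intro i hi
    simp only [Pi.one_apply, mul_one]
    gcongr
    · linarith [abs_nonneg C]
    · exact le_norm_sum_mul_inv_sub (mem_Ico.1 hi).1 (mem_Ico.1 hi).2
        (fun j hj => dist_eq_norm (σ i j) b ▸ hlow i j hj)
        (fun j hj => dist_eq_norm (σ i j) a ▸ hup i j hj)
  have hsum := (card_nsmul_le_sum _ _ _ hrow).trans (h (Ico M (2 * M)) (range (3 * M)) 1)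
  simp only [Nat.card_Ico, Pi.one_apply, norm_one, one_pow, sum_const, card_range, nsmul_eq_mul,
    mul_one, show 2 * M - M = M by omega] at hsum
  push_cast at hsum
  have hsq : (2 * |C|) ^ 2 < lb M ^ 2 := pow_lt_pow_left₀ hMC (by positivity) two_ne_zero
  rw [mul_pow, sq_abs] at hsq
  have hM' : (1 : ℝ) ≤ M := by exact_mod_cast hM
  nlinarith

lemma exists_strictMono_near_iterated_limits {E : Type*} [PseudoMetricSpace E]
    {S : ℕ → ℕ → E} {R C : ℕ → E} {a b : E}
    (hR : ∀ k, Tendsto (S k) atTop (𝓝 (R k))) (ha : Tendsto R atTop (𝓝 a))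
    (hC : ∀ n, Tendsto (fun k => S k n) atTop (𝓝 (C n))) (hb : Tendsto C atTop (𝓝 b))
    {ε : ℝ} (hε : 0 < ε) :
    ∃ k n : ℕ → ℕ, StrictMono k ∧ StrictMono n ∧
      (∀ i j, i ≤ j → dist (S (k i) (n j)) a ≤ ε) ∧
      (∀ i j, j < i → dist (S (k i) (n j)) b ≤ ε) := by
  have near {u : ℕ → E} {l : E} (h : Tendsto u atTop (𝓝 l)) : ∀ᶠ x in atTop, dist (u x) l ≤ ε / 2 :=
    (Metric.tendsto_nhds.1 h _ (half_pos hε)).mono fun _ => le_of_lt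
  have hrow : ∀ N r₀, ∃ r > r₀, dist (R r) a ≤ ε / 2 ∧ ∀ m ≤ N, dist (S r m) (C m) ≤ ε / 2 :=
    fun N r₀ => ((eventually_gt_atTop r₀).and ((near ha).and
      ((Set.finite_Iic N).eventually_all.2 fun m _ => near (hC m)))).exists
  have hcol : ∀ N c₀, ∃ c > c₀, dist (C c) b ≤ ε / 2 ∧ ∀ m ≤ N, dist (S m c) (R m) ≤ ε / 2 :=
    fun N c₀ => ((eventually_gt_atTop c₀).and ((near hb).and
      ((Set.finite_Iic N).eventually_all.2 fun m _ => near (hR m)))).exists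
  choose f hf_gt hf_near hf using hrow
  choose g hg_gt hg_near hg using hcol
  -- Row `k i` is chosen good for all columns up to `n (i - 1)`, then column `n i` good for all
  -- rows up to `k i`.
  let step : ℕ × ℕ → ℕ × ℕ := fun p => (f p.2 p.1, g (f p.2 p.1) p.2)
  let q : ℕ → ℕ × ℕ := fun i => step^[i] (0, 0)
  let k : ℕ → ℕ := fun i => (step (q i)).1
  let n : ℕ → ℕ := fun i => (step (q i)).2
  have hq : ∀ i, q (i + 1) = (k i, n i) := fun i => iterate_succ_apply' step i (0, 0)
  have hk : StrictMono k := strictMono_nat_of_lt_succ fun i => by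
    show k i < f (q (i + 1)).2 (q (i + 1)).1
    rw [hq]; exact hf_gt _ _
  have hn : StrictMono n := strictMono_nat_of_lt_succ fun i => by
    show n i < g (k (i + 1)) (q (i + 1)).2
    rw [hq]; exact hg_gt _ _
  refine ⟨k, n, hk, hn, fun i j hij => ?_, fun i j hji => ?_⟩
  · calc dist (S (k i) (n j)) a ≤ dist (S (k i) (n j)) (R (k i)) + dist (R (k i)) a :=
          dist_triangle _ _ _
      _ ≤ ε / 2 + ε / 2 := add_le_add (hg _ _ _ (hk.monotone hij)) (hf_near _ _)
      _ = ε := add_halves ε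
  · obtain ⟨i, rfl⟩ : ∃ i', i = i' + 1 := ⟨i - 1, by omega⟩
    have hnj : n j ≤ (q (i + 1)).2 := by rw [hq]; exact hn.monotone (by omega)
    calc dist (S (k (i + 1)) (n j)) b ≤ dist (S (k (i + 1)) (n j)) (C (n j)) + dist (C (n j)) b :=
          dist_triangle _ _ _
      _ ≤ ε / 2 + ε / 2 := add_le_add (hf _ _ _ hnj) (hg_near _ _)
      _ = ε := add_halves ε

end SchurIteratedLimits

end

open SchurIteratedLimits

/-- Bennett–Coine necessary condition: if `S` is a Schur multiplier on `ℓ²` and both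
iterated limits of its entries exist, then they coincide. -/
theorem schur_iterated_limits_agree (S : ℕ → ℕ → ℂ) (hS : IsSchurMult 2 S)
    (L1 L2 : ℂ) (R C' : ℕ → ℂ)
    (hR : ∀ k : ℕ, Filter.Tendsto (fun n => S k n) Filter.atTop (nhds (R k)))
    (hL1 : Filter.Tendsto R Filter.atTop (nhds L1))
    (hC : ∀ n : ℕ, Filter.Tendsto (fun k => S k n) Filter.atTop (nhds (C' n)))
    (hL2 : Filter.Tendsto C' Filter.atTop (nhds L2)) :
    L1 = L2 := by
  by_contra hne
  obtain ⟨k, n, hk, hn, hup, hlow⟩ := exists_strictMono_near_iterated_limits hR hL1 hC hL2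
    (div_pos (norm_pos_iff.2 (sub_ne_zero.2 hne)) four_pos)
  have hHilbert : IsBoundedOn 2 (embedMatrix k n fun i j => ((i : ℂ) - j)⁻¹) :=
    ⟨π, Real.pi_pos.le, (matBound_embedMatrix_iff hk.injective hn.injective π).2 hilbert_inequality⟩
  obtain ⟨C, -, hSC⟩ := hS _ hHilbert
  rw [mul_embedMatrix, matBound_embedMatrix_iff hk.injective hn.injective] at hSC
  exact not_forall_sum_sq_le (σ := fun i j => S (k i) (n j)) hne hup hlow C hSC
end

section
/- The lower-triangular truncation of the discrete Hilbert transform, i.e. the matrix with entries 1/(n−k) for 0 ≤ k < n and 0 otherwise, is not a bounded operator on ℓ². -/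
/-!
Test the matrix against `x_k = (k + 1)^(-1/2)` for `k < N`, so that `‖x‖² = H_N`. Since
`x_k ≥ n^(-1/2)` for `k < n`, the `n`-th coordinate of `Ax` is at least `H_n / √n`, whence
`‖Ax‖² ≥ ∑_{n ≤ N} H_n² / n = ∑_{n ≤ N} H_n² (H_n - H_{n-1}) ≥ H_N³ / 3`.
A bound `‖Ax‖ ≤ C ‖x‖` would force `H_N² ≤ 3C²` for every `N`, but `H_N → ∞`.
-/

open scoped BigOperators

open Finset Filter

def matVec (A : ℕ → ℕ → ℂ) (x : ℕ →₀ ℂ) (n : ℕ) : ℂ := ∑ k ∈ x.support, A n k * x k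

theorem matVec_eq_sum_of_support_subset (A : ℕ → ℕ → ℂ) {x : ℕ →₀ ℂ} {s : Finset ℕ}
    (hs : x.support ⊆ s) (n : ℕ) : matVec A x n = ∑ k ∈ s, A n k * x k :=
  Finsupp.sum_of_support_subset x hs (fun k c => A n k * c) fun _ _ => mul_zero _

theorem MatBound.sum_le {p : ℝ} {A : ℕ → ℕ → ℂ} {C : ℝ} (h : MatBound p A C) (x : ℕ →₀ ℂ)
    (s : Finset ℕ) :
    ∑ n ∈ s, ‖matVec A x n‖ ^ p ≤ C ^ p * ∑ k ∈ x.support, ‖x k‖ ^ p :=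
  ((h x).1.sum_le_tsum s fun n _ => by positivity).trans (h x).2

theorem cube_sub_le_three_mul_sum_sq_mul_sub {a : ℕ → ℝ} (ha : Monotone a) (h0 : 0 ≤ a 0)
    (N : ℕ) :
    a N ^ 3 - a 0 ^ 3 ≤ 3 * ∑ n ∈ range N, a (n + 1) ^ 2 * (a (n + 1) - a n) := by
  rw [← sum_range_sub (fun n => a n ^ 3), mul_sum]
  refine sum_le_sum fun n _ => ?_
  have hle : a n ≤ a (n + 1) := ha n.le_succ
  have hnonneg : 0 ≤ a n := h0.trans (ha n.zero_le)
  -- `a³ - b³ = (a - b)(a² + ab + b²) ≤ 3a²(a - b)` for `0 ≤ b ≤ a`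
  nlinarith [mul_nonneg (sub_nonneg.2 hle) (sub_nonneg.2 hle),
    mul_nonneg (sub_nonneg.2 hle) hnonneg]

theorem harmonic_nonneg (n : ℕ) : 0 ≤ harmonic n :=
  sum_nonneg fun _ _ => by positivity

theorem harmonic_real_succ_sub (n : ℕ) :
    (harmonic (n + 1) : ℝ) - harmonic n = ((n + 1 : ℕ) : ℝ)⁻¹ := by
  simp

theorem harmonic_real_mono : Monotone fun n => (harmonic n : ℝ) :=
  monotone_nat_of_le_succ fun n => sub_nonneg.1 (by rw [harmonic_real_succ_sub]; positivity)

theorem tendsto_harmonic_real_atTop : Tendsto (fun n => (harmonic n : ℝ)) atTop atTop := by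
  convert Real.tendsto_sum_range_one_div_nat_succ_atTop using 2 with n
  simp [harmonic]

theorem sum_range_inv_sub_eq_harmonic (n : ℕ) :
    ∑ k ∈ range n, ((n : ℝ) - k)⁻¹ = harmonic n := by
  rw [← sum_range_reflect, harmonic]
  push_cast
  refine sum_congr rfl fun k hk => ?_
  rw [show n - 1 - k = n - (k + 1) by omega, Nat.cast_sub (by simp at hk; omega)]
  push_cast
  ring_nf

theorem harmonic_div_sqrt_le_sum (n : ℕ) :
    harmonic n / √n ≤ ∑ k ∈ range n, ((n : ℝ) - k)⁻¹ * (√(k + 1))⁻¹ := by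
  rw [← sum_range_inv_sub_eq_harmonic, sum_div]
  refine sum_le_sum fun k hk => ?_
  have hk : (k : ℝ) + 1 ≤ n := by exact_mod_cast mem_range.1 hk
  rw [div_eq_mul_inv]
  gcongr
  exact inv_nonneg.2 (by linarith)

noncomputable def truncHilbert (n k : ℕ) : ℂ := if k < n then 1 / ((n : ℂ) - (k : ℂ)) else 0

noncomputable def invSqrtSucc (N : ℕ) : ℕ →₀ ℂ :=
  Finsupp.onFinset (range N) (fun k => if k < N then ((√(k + 1))⁻¹ : ℝ) else 0)
    fun k hk => mem_range.2 (by by_contra h; exact hk (if_neg h))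

theorem invSqrtSucc_apply_of_lt {N k : ℕ} (hk : k < N) :
    invSqrtSucc N k = ((√(k + 1))⁻¹ : ℝ) :=
  if_pos hk

theorem support_invSqrtSucc_subset (N : ℕ) : (invSqrtSucc N).support ⊆ range N :=
  Finsupp.support_onFinset_subset

theorem sum_norm_sq_invSqrtSucc (N : ℕ) :
    ∑ k ∈ (invSqrtSucc N).support, ‖invSqrtSucc N k‖ ^ (2 : ℝ) = harmonic N := by
  refine (Finsupp.sum_of_support_subset _ (support_invSqrtSucc_subset N)
    (fun _ c => ‖c‖ ^ (2 : ℝ)) fun _ _ => by simp).trans ?_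
  rw [harmonic]
  push_cast
  refine sum_congr rfl fun k hk => ?_
  rw [invSqrtSucc_apply_of_lt (mem_range.1 hk), Complex.norm_real, Real.rpow_two, norm_inv,
    Real.norm_of_nonneg (Real.sqrt_nonneg _), inv_pow, Real.sq_sqrt (by positivity)]

theorem matVec_truncHilbert_invSqrtSucc {n N : ℕ} (hn : n ≤ N) :
    matVec truncHilbert (invSqrtSucc N) n =
      ((∑ k ∈ range n, ((n : ℝ) - k)⁻¹ * (√(k + 1))⁻¹ : ℝ) : ℂ) := by
  rw [matVec_eq_sum_of_support_subset _ (support_invSqrtSucc_subset N),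
    ← sum_subset (range_subset_range.2 hn) fun k _ hk => by
      rw [truncHilbert, if_neg (by simpa using hk), zero_mul]]
  push_cast
  refine sum_congr rfl fun k hk => ?_
  have hk := mem_range.1 hk
  rw [truncHilbert, if_pos hk, invSqrtSucc_apply_of_lt (hk.trans_le hn), one_div,
    Complex.ofReal_inv]

theorem sq_harmonic_div_le_norm_matVec_sq {n N : ℕ} (hn : n ≤ N) :
    (harmonic n : ℝ) ^ 2 / n ≤ ‖matVec truncHilbert (invSqrtSucc N) n‖ ^ 2 := by
  have hrow := harmonic_div_sqrt_le_sum n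
  have hnonneg : 0 ≤ (harmonic n : ℝ) / √n :=
    div_nonneg (mod_cast harmonic_nonneg n) (Real.sqrt_nonneg _)
  rw [matVec_truncHilbert_invSqrtSucc hn, Complex.norm_real,
    Real.norm_of_nonneg (hnonneg.trans hrow)]
  calc (harmonic n : ℝ) ^ 2 / n = (harmonic n / √n) ^ 2 := by
        rw [div_pow, Real.sq_sqrt n.cast_nonneg]
    _ ≤ _ := pow_le_pow_left₀ hnonneg hrow 2

theorem not_isBoundedOn_two_truncHilbert : ¬ IsBoundedOn 2 truncHilbert := by
  rintro ⟨C, -, hC⟩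
  obtain ⟨N, hN⟩ := (tendsto_harmonic_real_atTop.eventually_ge_atTop (3 * C ^ 2 + 1)).exists
  have hcube : (harmonic N : ℝ) ^ 3 / 3 ≤ C ^ 2 * harmonic N :=
    calc (harmonic N : ℝ) ^ 3 / 3
        ≤ ∑ n ∈ range N, (harmonic (n + 1) : ℝ) ^ 2 * (harmonic (n + 1) - harmonic n) := by
          have := cube_sub_le_three_mul_sum_sq_mul_sub harmonic_real_mono (by simp) N
          simp only [harmonic_zero, Rat.cast_zero] at this
          linarith
      _ ≤ ∑ n ∈ range N, ‖matVec truncHilbert (invSqrtSucc N) (n + 1)‖ ^ (2 : ℝ) :=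
          sum_le_sum fun n hn => by
            rw [harmonic_real_succ_sub, ← div_eq_mul_inv, Real.rpow_two]
            exact sq_harmonic_div_le_norm_matVec_sq (mem_range.1 hn)
      _ ≤ ∑ n ∈ range (N + 1), ‖matVec truncHilbert (invSqrtSucc N) n‖ ^ (2 : ℝ) := by
          rw [sum_range_succ' _ N]
          exact le_add_of_nonneg_right (by positivity)
      _ ≤ C ^ (2 : ℝ) * ∑ k ∈ (invSqrtSucc N).support, ‖invSqrtSucc N k‖ ^ (2 : ℝ) :=
          hC.sum_le _ _
      _ = C ^ 2 * harmonic N := by rw [sum_norm_sq_invSqrtSucc, Real.rpow_two]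
  have hpos : 0 < (harmonic N : ℝ) := by nlinarith [sq_nonneg C]
  have hsq : (harmonic N : ℝ) ^ 2 ≤ 3 * C ^ 2 := le_of_mul_le_mul_right (by linarith) hpos
  nlinarith

/-- The strictly lower triangular truncation of the discrete Hilbert transform, with
entries `1/(n−k)` for `0 ≤ k < n` and `0` otherwise, is unbounded on `ℓ²`. -/
theorem truncated_hilbert_unbounded :
    ¬ IsBoundedOn 2 (fun n k => if k < n then 1 / ((n : ℂ) - (k : ℂ)) else 0) :=
  not_isBoundedOn_two_truncHilbert
end

section
/- Let ω = (ω_n) be a positive weight with lim_n ω_n/ω_{n+1} = 1, and 1 < p < ∞. If g is a multiplier of the weighted space ℓ^p_A(ω) (i.e., multiplication by g is bounded on ℓ^p_A(ω)), then the generalized Volterra operator T_g f(z) = ∫_0^z f(t) g'(t) dt is bounded on ℓ^p_A(ω). -/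
open scoped BigOperators

/-!
On every row `n ≥ 1` the Volterra matrix equals `T - D`, where `T` is the (lower triangular,
Toeplitz) matrix of multiplication by `g` and `D = diag(n)⁻¹ T diag(n)`, so it suffices to bound
`D`. Split the sequence `k x_k` into dyadic blocks `2 ^ i ≤ k < 2 ^ (i + 1)` and let `y_i` be
block `i` divided by `2 ^ i`; then `‖y_i‖ ≤ 2 ‖x‖` on block `i`. As `T` is lower triangular, only
blocks with `2 ^ i ≤ n` reach row `n`, and the weights `2 ^ i` of these blocks add up to at most
`2 n`, so Hölder's inequality gives `|(D x)_n| ^ p ≤ 2 ^ (p - 1) ∑_i |(T y_i)_n| ^ p`. Summing over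
`n` and applying the multiplier bound to each `y_i` bounds `D` by `4 C`.
-/

/-- `WMatBound p ω A C` : the matrix `A` (row index first), acting on Taylor coefficient
sequences, is bounded on the weighted space `ℓ^p_A(ω)` with norm at most `C`
(tested on finitely supported sequences, i.e. polynomials, which are dense). -/
noncomputable def WMatBound (p : ℝ) (ω : ℕ → ℝ) (A : ℕ → ℕ → ℂ) (C : ℝ) : Prop :=
  ∀ x : ℕ →₀ ℂ,
    Summable (fun n : ℕ => ‖∑ k ∈ x.support, A n k * x k‖ ^ p * ω n) ∧
    ∑' n : ℕ, ‖∑ k ∈ x.support, A n k * x k‖ ^ p * ω n ≤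
      C ^ p * ∑ k ∈ x.support, ‖x k‖ ^ p * ω k

open Finset

theorem Real.rpow_add_le_mul_rpow_add_rpow {p a b : ℝ} (hp : 1 ≤ p) (ha : 0 ≤ a) (hb : 0 ≤ b) :
    (a + b) ^ p ≤ 2 ^ (p - 1) * (a ^ p + b ^ p) := by
  lift a to NNReal using ha
  lift b to NNReal using hb
  exact_mod_cast NNReal.rpow_add_le_mul_rpow_add_rpow a b hp

theorem Real.rpow_inner_le_weight_mul_Lp_of_nonneg {ι : Type*} (s : Finset ι) {p : ℝ}
    (hp : 1 ≤ p) {w f : ι → ℝ} (hw : ∀ i, 0 ≤ w i) (hf : ∀ i, 0 ≤ f i) :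
    (∑ i ∈ s, w i * f i) ^ p ≤ (∑ i ∈ s, w i) ^ (p - 1) * ∑ i ∈ s, w i * f i ^ p := by
  have hW : 0 ≤ ∑ i ∈ s, w i := sum_nonneg fun i _ => hw i
  have hT : 0 ≤ ∑ i ∈ s, w i * f i ^ p :=
    sum_nonneg fun i _ => mul_nonneg (hw i) (Real.rpow_nonneg (hf i) p)
  have hp0 : p ≠ 0 := by positivity
  calc (∑ i ∈ s, w i * f i) ^ p
      ≤ ((∑ i ∈ s, w i) ^ (1 - p⁻¹) * (∑ i ∈ s, w i * f i ^ p) ^ p⁻¹) ^ p :=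
        Real.rpow_le_rpow (sum_nonneg fun i _ => mul_nonneg (hw i) (hf i))
          (Real.inner_le_weight_mul_Lp_of_nonneg s hp w f hw hf) (by positivity)
    _ = (∑ i ∈ s, w i) ^ (p - 1) * ∑ i ∈ s, w i * f i ^ p := by
        rw [Real.mul_rpow (by positivity) (by positivity), ← Real.rpow_mul hW,
          Real.rpow_inv_rpow hT hp0, sub_mul, one_mul, inv_mul_cancel₀ hp0]

theorem Nat.sum_two_pow_le_two_mul {n : ℕ} {s : Finset ℕ} (hs : ∀ i ∈ s, 2 ^ i ≤ n) :
    ∑ i ∈ s, 2 ^ i ≤ 2 * n := by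
  obtain rfl | hn := eq_or_ne n 0
  · exact (sum_eq_zero fun i hi => absurd (hs i hi) (Nat.not_le.2 (Nat.two_pow_pos i))).le
  calc ∑ i ∈ s, 2 ^ i ≤ 2 ^ (Nat.log 2 n + 1) :=
        (Nat.geomSum_lt le_rfl fun i hi =>
          Nat.lt_succ_of_le (Nat.le_log_of_pow_le one_lt_two (hs i hi))).le
    _ ≤ 2 * n := by rw [pow_succ, mul_comm]; exact Nat.mul_le_mul_left 2 (Nat.pow_log_le_self 2 hn)

theorem inv_mul_sum_two_pow_mul_rpow_le {p : ℝ} (hp : 1 ≤ p) {n : ℕ} {s : Finset ℕ}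
    (hs : ∀ i ∈ s, 2 ^ i ≤ n) {b : ℕ → ℝ} (hb : ∀ i, 0 ≤ b i) :
    ((n : ℝ)⁻¹ * ∑ i ∈ s, 2 ^ i * b i) ^ p ≤ 2 ^ (p - 1) * ∑ i ∈ s, b i ^ p := by
  have hp0 : 0 < p := by linarith
  have hbp : 0 ≤ ∑ i ∈ s, b i ^ p := sum_nonneg fun i _ => Real.rpow_nonneg (hb i) p
  obtain rfl | hn := eq_or_ne n 0
  · rw [Nat.cast_zero, inv_zero, zero_mul, Real.zero_rpow hp0.ne']
    positivity
  have hn : (0 : ℝ) < n := by positivity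
  have hweights : ∑ i ∈ s, (2 : ℝ) ^ i ≤ 2 * n := by
    exact_mod_cast Nat.sum_two_pow_le_two_mul hs
  have hweighted : ∑ i ∈ s, 2 ^ i * b i ^ p ≤ n * ∑ i ∈ s, b i ^ p := by
    rw [mul_sum]
    exact sum_le_sum fun i hi =>
      mul_le_mul_of_nonneg_right (by exact_mod_cast hs i hi) (Real.rpow_nonneg (hb i) p)
  calc ((n : ℝ)⁻¹ * ∑ i ∈ s, 2 ^ i * b i) ^ p
      = (n : ℝ)⁻¹ ^ p * (∑ i ∈ s, 2 ^ i * b i) ^ p :=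
        Real.mul_rpow (by positivity) (sum_nonneg fun i _ => mul_nonneg (by positivity) (hb i))
    _ ≤ (n : ℝ)⁻¹ ^ p * ((∑ i ∈ s, (2 : ℝ) ^ i) ^ (p - 1) * ∑ i ∈ s, 2 ^ i * b i ^ p) := by
        gcongr
        exact Real.rpow_inner_le_weight_mul_Lp_of_nonneg s hp (fun i => by positivity) hb
    _ ≤ (n : ℝ)⁻¹ ^ p * ((2 * n) ^ (p - 1) * (n * ∑ i ∈ s, b i ^ p)) := by
        gcongr
        exact sum_nonneg fun i _ => mul_nonneg (by positivity) (Real.rpow_nonneg (hb i) p)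
    _ = 2 ^ (p - 1) * ∑ i ∈ s, b i ^ p := by
        rw [Real.inv_rpow hn.le, Real.mul_rpow zero_le_two hn.le, Real.rpow_sub_one hn.ne']
        field_simp

theorem Summable.summable_and_tsum_le_of_le {f g : ℕ → ℝ} (hg : Summable g)
    (hf : ∀ n, 0 ≤ f n) (hfg : ∀ n, f n ≤ g n) : Summable f ∧ ∑' n, f n ≤ ∑' n, g n :=
  ⟨hg.of_nonneg_of_le hf hfg, (hg.of_nonneg_of_le hf hfg).tsum_le_tsum hfg hg⟩

def matApply (A : ℕ → ℕ → ℂ) (x : ℕ →₀ ℂ) (n : ℕ) : ℂ := ∑ k ∈ x.support, A n k * x k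

noncomputable def wNormPow (p : ℝ) (ω : ℕ → ℝ) (x : ℕ →₀ ℂ) : ℝ :=
  ∑ k ∈ x.support, ‖x k‖ ^ p * ω k

theorem matApply_eq_sum_of_support_subset (A : ℕ → ℕ → ℂ) {x : ℕ →₀ ℂ} {s : Finset ℕ}
    (hs : x.support ⊆ s) (n : ℕ) : matApply A x n = ∑ k ∈ s, A n k * x k :=
  sum_subset hs fun k _ hk => by rw [Finsupp.notMem_support_iff.mp hk, mul_zero]

theorem wNormPow_eq_sum_of_support_subset {p : ℝ} (hp : p ≠ 0) (ω : ℕ → ℝ) {x : ℕ →₀ ℂ}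
    {s : Finset ℕ} (hs : x.support ⊆ s) : wNormPow p ω x = ∑ k ∈ s, ‖x k‖ ^ p * ω k :=
  sum_subset hs fun k _ hk => by
    rw [Finsupp.notMem_support_iff.mp hk, norm_zero, Real.zero_rpow hp, zero_mul]

section WMatBound

variable {p : ℝ} {ω : ℕ → ℝ} {A : ℕ → ℕ → ℂ} {C : ℝ}

theorem wMatBound_iff : WMatBound p ω A C ↔ ∀ x, Summable (fun n => ‖matApply A x n‖ ^ p * ω n) ∧
    ∑' n, ‖matApply A x n‖ ^ p * ω n ≤ C ^ p * wNormPow p ω x :=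
  Iff.rfl

theorem wNormPow_nonneg (hω : ∀ n, 0 ≤ ω n) (x : ℕ →₀ ℂ) : 0 ≤ wNormPow p ω x :=
  sum_nonneg fun k _ => mul_nonneg (by positivity) (hω k)

theorem WMatBound.mono (hp : 0 ≤ p) (hω : ∀ n, 0 ≤ ω n) (hC : 0 ≤ C) {C' : ℝ} (hCC' : C ≤ C')
    (hA : WMatBound p ω A C) : WMatBound p ω A C' := fun x =>
  ⟨(hA x).1, (hA x).2.trans <| by
    gcongr
    exact wNormPow_nonneg hω x⟩

theorem WMatBound.of_norm_le_add (hp : 1 ≤ p) (hω : ∀ n, 0 ≤ ω n) (hC : 0 ≤ C)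
    {B D : ℕ → ℕ → ℂ} (hA : WMatBound p ω A C) (hD : WMatBound p ω D C)
    (hB : ∀ x n, ‖matApply B x n‖ ≤ ‖matApply A x n‖ + ‖matApply D x n‖) :
    WMatBound p ω B (2 * C) := by
  rw [wMatBound_iff] at hA hD ⊢
  intro x
  obtain ⟨hAs, hAle⟩ := hA x
  obtain ⟨hDs, hDle⟩ := hD x
  have hle : ∀ n, ‖matApply B x n‖ ^ p * ω n ≤
      2 ^ (p - 1) * (‖matApply A x n‖ ^ p * ω n + ‖matApply D x n‖ ^ p * ω n) := fun n =>
    calc ‖matApply B x n‖ ^ p * ω n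
        ≤ (‖matApply A x n‖ + ‖matApply D x n‖) ^ p * ω n := by gcongr; exacts [hω n, hB x n]
      _ ≤ 2 ^ (p - 1) * (‖matApply A x n‖ ^ p + ‖matApply D x n‖ ^ p) * ω n := by
          gcongr
          exacts [hω n, Real.rpow_add_le_mul_rpow_add_rpow hp (norm_nonneg _) (norm_nonneg _)]
      _ = _ := by ring
  obtain ⟨hsummable, hle'⟩ := ((hAs.add hDs).mul_left (2 ^ (p - 1))).summable_and_tsum_le_of_le
    (fun n => mul_nonneg (by positivity) (hω n)) hle
  refine ⟨hsummable, hle'.trans ?_⟩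
  calc ∑' n, 2 ^ (p - 1) * (‖matApply A x n‖ ^ p * ω n + ‖matApply D x n‖ ^ p * ω n)
      = 2 ^ (p - 1) * (∑' n, ‖matApply A x n‖ ^ p * ω n + ∑' n, ‖matApply D x n‖ ^ p * ω n) := by
        rw [tsum_mul_left, hAs.tsum_add hDs]
    _ ≤ 2 ^ (p - 1) * (C ^ p * wNormPow p ω x + C ^ p * wNormPow p ω x) := by gcongr
    _ = (2 * C) ^ p * wNormPow p ω x := by
        rw [Real.mul_rpow zero_le_two hC, Real.rpow_sub_one two_ne_zero]
        ring

end WMatBound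

/-- The block `2 ^ i ≤ k < 2 ^ (i + 1)` of the sequence `k x_k`, scaled down by `2 ^ i`. -/
noncomputable def dyadicPiece (x : ℕ →₀ ℂ) (i : ℕ) : ℕ →₀ ℂ :=
  (fun k : ℕ => if Nat.log 2 k = i then (k : ℂ) / 2 ^ i else 0) • x

section dyadicPiece

variable (x : ℕ →₀ ℂ) {i k : ℕ}

theorem dyadicPiece_apply (i k : ℕ) :
    dyadicPiece x i k = if Nat.log 2 k = i then (k : ℂ) / 2 ^ i * x k else 0 := by
  simp only [dyadicPiece, Finsupp.coe_pointwise_smul, smul_eq_mul, Pi.mul_apply, ite_mul,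
    zero_mul]

theorem support_dyadicPiece_subset (i : ℕ) : (dyadicPiece x i).support ⊆ x.support := by
  intro k hk
  rw [Finsupp.mem_support_iff] at hk ⊢
  contrapose! hk
  simp [dyadicPiece_apply, hk]

theorem dyadicPiece_eq_zero_of_lt (hk : k < 2 ^ i) : dyadicPiece x i k = 0 := by
  rw [dyadicPiece_apply]
  split_ifs with hlog
  · obtain rfl | hk0 := eq_or_ne k 0
    · simp
    have := Nat.pow_log_le_self 2 hk0
    rw [hlog] at this
    omega
  · rfl

theorem norm_dyadicPiece_le (i k : ℕ) : ‖dyadicPiece x i k‖ ≤ 2 * ‖x k‖ := by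
  rw [dyadicPiece_apply]
  split_ifs with hlog
  · have hk : k < 2 * 2 ^ i := by
      rw [← pow_succ', ← hlog]
      exact Nat.lt_pow_succ_log_self one_lt_two k
    rw [norm_mul, norm_div, Complex.norm_natCast, norm_pow, Complex.norm_two]
    gcongr
    rw [div_le_iff₀ (by positivity)]
    exact_mod_cast hk.le
  · simp

theorem sum_two_pow_mul_dyadicPiece {L : ℕ} (hk : Nat.log 2 k < L) :
    ∑ i ∈ range L, (2 : ℂ) ^ i * dyadicPiece x i k = k * x k := by
  simp_rw [dyadicPiece_apply, mul_ite, mul_zero]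
  rw [sum_ite_eq, if_pos (mem_range.2 hk)]
  field_simp

theorem sum_wNormPow_dyadicPiece_le {p : ℝ} (hp : 0 < p) {ω : ℕ → ℝ} (hω : ∀ n, 0 ≤ ω n)
    {L : ℕ} (hL : ∀ k ∈ x.support, Nat.log 2 k < L) :
    ∑ i ∈ range L, wNormPow p ω (dyadicPiece x i) ≤ 2 ^ p * wNormPow p ω x := by
  have hpiece : ∀ i, wNormPow p ω (dyadicPiece x i) =
      ∑ k ∈ x.support, ‖dyadicPiece x i k‖ ^ p * ω k := fun i =>
    wNormPow_eq_sum_of_support_subset hp.ne' ω (support_dyadicPiece_subset x i)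
  rw [sum_congr rfl fun i _ => hpiece i, sum_comm, wNormPow, mul_sum]
  gcongr with k hk
  rw [sum_eq_single_of_mem (Nat.log 2 k) (mem_range.2 (hL k hk)) fun i _ hi => by
    rw [dyadicPiece_apply, if_neg (Ne.symm hi), norm_zero, Real.zero_rpow hp.ne', zero_mul]]
  rw [← mul_assoc, ← Real.mul_rpow zero_le_two (norm_nonneg _)]
  gcongr
  · exact hω k
  · exact norm_dyadicPiece_le x _ k

end dyadicPiece

/-- The matrix `diag(n)⁻¹ A diag(n)`; its row `0` vanishes because `(k : ℂ) / 0 = 0`. -/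
noncomputable def diagConj (A : ℕ → ℕ → ℂ) (n k : ℕ) : ℂ := (k : ℂ) / n * A n k

theorem matApply_dyadicPiece_eq_zero {A : ℕ → ℕ → ℂ} (hA : ∀ n k, n < k → A n k = 0)
    (x : ℕ →₀ ℂ) {n i : ℕ} (hn : n < 2 ^ i) : matApply A (dyadicPiece x i) n = 0 :=
  sum_eq_zero fun k _ => by
    rcases lt_or_ge n k with hnk | hkn
    · rw [hA n k hnk, zero_mul]
    · rw [dyadicPiece_eq_zero_of_lt x (hkn.trans_lt hn), mul_zero]

theorem matApply_diagConj (A : ℕ → ℕ → ℂ) (x : ℕ →₀ ℂ) {L : ℕ}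
    (hL : ∀ k ∈ x.support, Nat.log 2 k < L) (n : ℕ) :
    matApply (diagConj A) x n =
      (n : ℂ)⁻¹ * ∑ i ∈ range L, 2 ^ i * matApply A (dyadicPiece x i) n :=
  calc matApply (diagConj A) x n = (n : ℂ)⁻¹ * ∑ k ∈ x.support, A n k * (k * x k) := by
        rw [matApply, mul_sum]
        exact sum_congr rfl fun k _ => by rw [diagConj, div_eq_mul_inv]; ring
    _ = (n : ℂ)⁻¹ * ∑ k ∈ x.support, ∑ i ∈ range L, 2 ^ i * (A n k * dyadicPiece x i k) := by
        refine congrArg _ (sum_congr rfl fun k hk => ?_)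
        rw [← sum_two_pow_mul_dyadicPiece x (hL k hk), mul_sum]
        exact sum_congr rfl fun i _ => by ring
    _ = (n : ℂ)⁻¹ * ∑ i ∈ range L, 2 ^ i * matApply A (dyadicPiece x i) n := by
        simp_rw [sum_comm (s := x.support), ← mul_sum,
          matApply_eq_sum_of_support_subset A (support_dyadicPiece_subset x _)]

theorem norm_matApply_diagConj_rpow_le {p : ℝ} (hp : 1 ≤ p) {A : ℕ → ℕ → ℂ}
    (hA : ∀ n k, n < k → A n k = 0) (x : ℕ →₀ ℂ) {L : ℕ}
    (hL : ∀ k ∈ x.support, Nat.log 2 k < L) (n : ℕ) :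
    ‖matApply (diagConj A) x n‖ ^ p ≤
      2 ^ (p - 1) * ∑ i ∈ range L, ‖matApply A (dyadicPiece x i) n‖ ^ p := by
  set S := (range L).filter (fun i => 2 ^ i ≤ n)
  have hrow : matApply (diagConj A) x n =
      (n : ℂ)⁻¹ * ∑ i ∈ S, 2 ^ i * matApply A (dyadicPiece x i) n := by
    rw [matApply_diagConj A x hL, sum_filter_of_ne fun i _ hi => ?_]
    by_contra hlt
    exact hi (by rw [matApply_dyadicPiece_eq_zero hA x (not_le.1 hlt), mul_zero])
  have hnorm : ‖matApply (diagConj A) x n‖ ≤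
      (n : ℝ)⁻¹ * ∑ i ∈ S, 2 ^ i * ‖matApply A (dyadicPiece x i) n‖ := by
    rw [hrow, norm_mul, norm_inv, Complex.norm_natCast]
    gcongr
    refine (norm_sum_le _ _).trans_eq (sum_congr rfl fun i _ => ?_)
    rw [norm_mul, norm_pow, Complex.norm_two]
  calc ‖matApply (diagConj A) x n‖ ^ p
      ≤ ((n : ℝ)⁻¹ * ∑ i ∈ S, 2 ^ i * ‖matApply A (dyadicPiece x i) n‖) ^ p :=
        Real.rpow_le_rpow (norm_nonneg _) hnorm (by linarith)
    _ ≤ 2 ^ (p - 1) * ∑ i ∈ S, ‖matApply A (dyadicPiece x i) n‖ ^ p :=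
        inv_mul_sum_two_pow_mul_rpow_le hp (fun i hi => (mem_filter.1 hi).2) fun i => norm_nonneg _
    _ ≤ 2 ^ (p - 1) * ∑ i ∈ range L, ‖matApply A (dyadicPiece x i) n‖ ^ p := by
        gcongr
        exact filter_subset _ _

theorem wMatBound_diagConj {p : ℝ} {ω : ℕ → ℝ} {A : ℕ → ℕ → ℂ} {C : ℝ} (hp : 1 ≤ p)
    (hω : ∀ n, 0 ≤ ω n) (hC : 0 ≤ C) (hA : ∀ n k, n < k → A n k = 0)
    (hbound : WMatBound p ω A C) : WMatBound p ω (diagConj A) (4 * C) := by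
  rw [wMatBound_iff] at hbound ⊢
  intro x
  set L := x.support.sup (Nat.log 2) + 1
  have hL : ∀ k ∈ x.support, Nat.log 2 k < L := fun k hk => Nat.lt_succ_of_le (le_sup hk)
  set F : ℕ → ℕ → ℝ := fun i n => ‖matApply A (dyadicPiece x i) n‖ ^ p * ω n
  have hle : ∀ n, ‖matApply (diagConj A) x n‖ ^ p * ω n ≤ 2 ^ (p - 1) * ∑ i ∈ range L, F i n :=
    fun n => by
      simp only [F, ← sum_mul, ← mul_assoc]
      exact mul_le_mul_of_nonneg_right (norm_matApply_diagConj_rpow_le hp hA x hL n) (hω n)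
  obtain ⟨hsummable, hle'⟩ := ((summable_sum fun i _ => (hbound _).1).mul_left
    (2 ^ (p - 1))).summable_and_tsum_le_of_le (fun n => mul_nonneg (by positivity) (hω n)) hle
  refine ⟨hsummable, hle'.trans ?_⟩
  have hN := wNormPow_nonneg (p := p) hω x
  calc ∑' n, 2 ^ (p - 1) * ∑ i ∈ range L, F i n
      = 2 ^ (p - 1) * ∑ i ∈ range L, ∑' n, F i n := by
        rw [tsum_mul_left, Summable.tsum_finsetSum fun i _ => (hbound _).1]
    _ ≤ 2 ^ (p - 1) * ∑ i ∈ range L, C ^ p * wNormPow p ω (dyadicPiece x i) := by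
        gcongr with i
        exact (hbound _).2
    _ ≤ 2 ^ (p - 1) * (C ^ p * (2 ^ p * wNormPow p ω x)) := by
        rw [← mul_sum]
        gcongr
        exact sum_wNormPow_dyadicPiece_le x (by linarith) hω hL
    _ ≤ 2 ^ p * (C ^ p * (2 ^ p * wNormPow p ω x)) := by
        gcongr
        exacts [one_le_two, by linarith]
    _ = (4 * C) ^ p * wNormPow p ω x := by
        rw [Real.mul_rpow (by norm_num) hC, show (4 : ℝ) = 2 * 2 by norm_num,
          Real.mul_rpow zero_le_two zero_le_two]
        ring

def toeplitzMatrix (g : ℕ → ℂ) (n k : ℕ) : ℂ := if k ≤ n then g (n - k) else 0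

noncomputable def volterraMatrix (g : ℕ → ℂ) (n k : ℕ) : ℂ :=
  if k < n then ((((n : ℝ) - (k : ℝ)) / (n : ℝ) : ℝ) : ℂ) * g (n - k) else 0

section volterraMatrix

variable (g : ℕ → ℂ)

theorem toeplitzMatrix_eq_zero_of_lt {n k : ℕ} (h : n < k) : toeplitzMatrix g n k = 0 :=
  if_neg (not_le.2 h)

theorem volterraMatrix_eq_sub {n : ℕ} (hn : n ≠ 0) (k : ℕ) :
    volterraMatrix g n k = toeplitzMatrix g n k - diagConj (toeplitzMatrix g) n k := by
  have hn' : (n : ℂ) ≠ 0 := Nat.cast_ne_zero.2 hn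
  rcases lt_trichotomy k n with h | rfl | h
  · simp only [volterraMatrix, toeplitzMatrix, diagConj, if_pos h, if_pos h.le]
    push_cast
    field_simp
  · simp [volterraMatrix, toeplitzMatrix, diagConj, hn']
  · simp [volterraMatrix, toeplitzMatrix, diagConj, not_lt.2 h.le, not_le.2 h]

theorem norm_matApply_volterraMatrix_le (x : ℕ →₀ ℂ) (n : ℕ) :
    ‖matApply (volterraMatrix g) x n‖ ≤
      ‖matApply (toeplitzMatrix g) x n‖ + ‖matApply (diagConj (toeplitzMatrix g)) x n‖ := by
  obtain rfl | hn := eq_or_ne n 0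
  · simp only [matApply, volterraMatrix, Nat.not_lt_zero, if_false, zero_mul, sum_const_zero,
      norm_zero]
    positivity
  · rw [matApply, sum_congr rfl fun k _ => by rw [volterraMatrix_eq_sub g hn, sub_mul],
      sum_sub_distrib]
    exact norm_sub_le _ _

end volterraMatrix

theorem multiplier_implies_volterra_bounded_general (p : ℝ) (hp : 1 < p)
    (ω : ℕ → ℝ) (hω : ∀ n, 0 < ω n)
    (g : ℕ → ℂ)
    (hg : ∃ C : ℝ, 0 ≤ C ∧
      WMatBound p ω (fun n k => if k ≤ n then g (n - k) else 0) C) :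
    ∃ C : ℝ, 0 ≤ C ∧
      WMatBound p ω
        (fun n k =>
          if k < n then ((((n : ℝ) - (k : ℝ)) / (n : ℝ) : ℝ) : ℂ) * g (n - k) else 0)
        C := by
  obtain ⟨C, hC, hT⟩ := hg
  have hω' : ∀ n, 0 ≤ ω n := fun n => (hω n).le
  have hD : WMatBound p ω (diagConj (toeplitzMatrix g)) (4 * C) :=
    wMatBound_diagConj hp.le hω' hC (fun _ _ => toeplitzMatrix_eq_zero_of_lt g) hT
  have hT' : WMatBound p ω (toeplitzMatrix g) (4 * C) :=
    hT.mono (by linarith) hω' hC (by linarith)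
  exact ⟨2 * (4 * C), by positivity,
    hT'.of_norm_le_add hp.le hω' (by positivity) hD (norm_matApply_volterraMatrix_le g)⟩

/-- If `g` (given by its Taylor coefficients) is a multiplier of `ℓ^p_A(ω)`, where `ω` is
a positive weight with `ω_n/ω_{n+1} → 1` and `1 < p < ∞`, then the generalized Volterra
operator `T_g`, whose matrix has entries `((n−k)/n)·ĝ(n−k)` for `0 ≤ k < n`, is bounded
on `ℓ^p_A(ω)`. -/
theorem multiplier_implies_volterra_bounded (p : ℝ) (hp : 1 < p)
    (ω : ℕ → ℝ) (hω : ∀ n, 0 < ω n)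
    (hratio : Filter.Tendsto (fun n => ω n / ω (n + 1)) Filter.atTop (nhds 1))
    (g : ℕ → ℂ)
    (hg : ∃ C : ℝ, 0 ≤ C ∧
      WMatBound p ω (fun n k => if k ≤ n then g (n - k) else 0) C) :
    ∃ C : ℝ, 0 ≤ C ∧
      WMatBound p ω
        (fun n k =>
          if k < n then ((((n : ℝ) - (k : ℝ)) / (n : ℝ) : ℝ) : ℂ) * g (n - k) else 0)
        C :=
  multiplier_implies_volterra_bounded_general p hp ω hω g hg
end

section
/- Let ω be a positive weight with lim_n ω_n/ω_{n+1} = 1 and 1 < p < ∞. If g lies in the closure of the multiplier algebra Mult(ℓ^p_A(ω)) inside the space T(ℓ^p_A(ω)) of symbols inducing bounded generalized Volterra operators (with the operator norm ‖T_h‖), then T_g is quasi-nilpotent on ℓ^p_A(ω), i.e., its spectrum is {0}. -/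
open scoped ENNReal

/-- `ℓ^p` over `ℕ`, serving as model of the weighted space `ℓ^p_A(ω)` via the natural
isometry `z^n ↦ ω_n^{-1/p} z^n`. -/
noncomputable abbrev Ellp (p : ℝ) := lp (fun _ : ℕ => ℂ) (ENNReal.ofReal p)

/-- Matrix of the generalized Volterra operator `T_g` on `ℓ^p_A(ω)`, conjugated by the
natural isometry onto `ℓ^p`: entries `((n−k)/n)·ĝ(n−k)·ω_n^{1/p}/ω_k^{1/p}` for
`0 ≤ k < n`, zero otherwise. -/
noncomputable def volMat (p : ℝ) (ω : ℕ → ℝ) (g : ℕ → ℂ) : ℕ → ℕ → ℂ := fun n k =>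
  if k < n then
    (((((n : ℝ) - (k : ℝ)) / (n : ℝ)) * (ω n ^ (1 / p) / ω k ^ (1 / p)) : ℝ) : ℂ) *
      g (n - k)
  else 0

/-- Matrix of the multiplication operator `M_h` on `ℓ^p_A(ω)`, conjugated by the natural
isometry onto `ℓ^p`: entries `ĥ(n−k)·ω_n^{1/p}/ω_k^{1/p}` for `0 ≤ k ≤ n`. -/
noncomputable def multMat (p : ℝ) (ω : ℕ → ℝ) (h : ℕ → ℂ) : ℕ → ℕ → ℂ := fun n k =>
  if k ≤ n then ((ω n ^ (1 / p) / ω k ^ (1 / p) : ℝ) : ℂ) * h (n - k) else 0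

/-- A continuous linear operator on `ℓ^p` is represented by the matrix `A` if its values
on the standard basis vectors have coordinates given by the columns of `A`. -/
def Represents (p : ℝ) [Fact (1 ≤ ENNReal.ofReal p)]
    (T : Ellp p →L[ℂ] Ellp p) (A : ℕ → ℕ → ℂ) : Prop :=
  ∀ k n : ℕ, (T (lp.single (ENNReal.ofReal p) k 1) : ∀ _ : ℕ, ℂ) n = A n k

/-! Integration by parts gives the operator identity `M_h T_f - T_f M_h = T_h T_f`. Taking for
`h` a multiplier with `‖T_{g-h}‖` small and `Q = T_h = T_g - T_{g-h}`, this yields `[M_h, Q] = Q²`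
and `[M_h, T_g] = Q T_g`. The first relation makes `Q` quasi-nilpotent, with
`‖Qⁿ⁺¹‖ ≤ ‖Q‖ (2‖M_h‖)ⁿ / n!`. Together with the second, conjugation by `(1 + z⁻¹Q) exp(-z⁻¹M_h)`
carries `z - T_g` to `z - T_{g-h}` for every `z ≠ 0`, so a nonzero point of the spectrum of `T_g`
would have modulus at most `‖T_{g-h}‖`, which is arbitrarily small. -/

section Ring

variable {R : Type*} [Ring R] {m q a : R}

theorem commutator_pow_of_commutator_eq_sq (h : m * q - q * m = q * q) (n : ℕ) :
    m * q ^ (n + 1) - q ^ (n + 1) * m = (n + 1) • q ^ (n + 2) := by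
  have leibniz : ∀ x y : R, m * (x * y) - x * y * m = (m * x - x * m) * y + x * (m * y - y * m) :=
    fun _ _ => by noncomm_ring
  induction n with
  | zero => simpa [sq] using h
  | succ n ih =>
    rw [pow_succ q (n + 1), leibniz, ih, h, smul_mul_assoc, ← mul_assoc,
      ← pow_succ, ← pow_succ, ← pow_succ, succ_nsmul _ (n + 1)]

theorem pow_mul_sub_mul_pow_of_commutator_eq (h : m * q - q * m = q * q)
    (ha : m * a - a * m = q * a) (n : ℕ) :
    m ^ (n + 1) * a - a * m ^ (n + 1) = (n + 1) • (q * (m ^ n * a)) := by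
  induction n with
  | zero => simpa using ha
  | succ n ih =>
    have hm : m * q = q * m + q * q := by rw [← h]; abel
    have hqa : q * (a * m ^ (n + 1))
        = q * (m ^ (n + 1) * a) - (n + 1) • (q * (q * (m ^ n * a))) := by
      rw [← mul_smul_comm, ← ih]
      noncomm_ring
    calc m ^ (n + 1 + 1) * a - a * m ^ (n + 1 + 1)
        = m * (m ^ (n + 1) * a - a * m ^ (n + 1)) + (m * a - a * m) * m ^ (n + 1) := by
          rw [pow_succ' m (n + 1)]
          noncomm_ring
      _ = (n + 1) • ((m * q) * (m ^ n * a)) + q * (a * m ^ (n + 1)) := by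
          rw [ih, ha, mul_smul_comm, mul_assoc, mul_assoc]
      _ = (n + 1 + 1) • (q * (m ^ (n + 1) * a)) := by
          rw [hqa, hm, pow_succ' m n]
          simp only [add_mul, mul_assoc, smul_add, succ_nsmul _ (n + 1)]
          abel

end Ring

theorem isUnit_one_sub_of_summable_norm_pow {R : Type*} [NormedRing R] [CompleteSpace R] {x : R}
    (hx : Summable fun n => ‖x ^ n‖) : IsUnit (1 - x) :=
  have hs : Summable (x ^ ·) := hx.of_norm
  ⟨⟨1 - x, ∑' n, x ^ n, hs.one_sub_mul_tsum_pow, hs.tsum_pow_mul_one_sub⟩, rfl⟩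

section BanachAlgebra

open NormedSpace

variable {A : Type*} [NormedRing A] [NormedAlgebra ℂ A] {m q a : A}

theorem norm_pow_succ_le_of_commutator_eq_sq (h : m * q - q * m = q * q) (n : ℕ) :
    ‖q ^ (n + 1)‖ ≤ ‖q‖ * (2 * ‖m‖) ^ n / n.factorial := by
  induction n with
  | zero => simp
  | succ n ih =>
    have hstep : (n + 1) * ‖q ^ (n + 2)‖ ≤ 2 * ‖m‖ * ‖q ^ (n + 1)‖ := by
      calc (n + 1) * ‖q ^ (n + 2)‖ = ‖(n + 1) • q ^ (n + 2)‖ := by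
            rw [RCLike.norm_nsmul ℂ, nsmul_eq_mul]; push_cast; ring
        _ = ‖m * q ^ (n + 1) - q ^ (n + 1) * m‖ := by
            rw [commutator_pow_of_commutator_eq_sq h]
        _ ≤ ‖m‖ * ‖q ^ (n + 1)‖ + ‖q ^ (n + 1)‖ * ‖m‖ :=
            (norm_sub_le _ _).trans (add_le_add (norm_mul_le _ _) (norm_mul_le _ _))
        _ = 2 * ‖m‖ * ‖q ^ (n + 1)‖ := by ring
    rw [Nat.factorial_succ, Nat.cast_mul, pow_succ (2 * ‖m‖) n, le_div_iff₀ (by positivity)]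
    calc ‖q ^ (n + 1 + 1)‖ * ((n + 1 : ℕ) * n.factorial)
        = ((n + 1) * ‖q ^ (n + 2)‖) * n.factorial := by push_cast; ring
      _ ≤ 2 * ‖m‖ * ‖q ^ (n + 1)‖ * n.factorial := by gcongr
      _ ≤ 2 * ‖m‖ * (‖q‖ * (2 * ‖m‖) ^ n / n.factorial) * n.factorial := by gcongr
      _ = ‖q‖ * ((2 * ‖m‖) ^ n * (2 * ‖m‖)) := by field_simp

theorem isUnit_one_sub_smul_of_commutator_eq_sq [CompleteSpace A] (h : m * q - q * m = q * q)
    (t : ℂ) : IsUnit (1 - t • q) := by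
  refine isUnit_one_sub_of_summable_norm_pow ((summable_nat_add_iff 1).mp ?_)
  refine .of_nonneg_of_le (fun _ => norm_nonneg _) (fun n => ?_)
    ((Real.summable_pow_div_factorial (‖t‖ * (2 * ‖m‖))).mul_left (‖t‖ * ‖q‖))
  calc ‖(t • q) ^ (n + 1)‖ = ‖t‖ ^ (n + 1) * ‖q ^ (n + 1)‖ := by
        rw [smul_pow, norm_smul, norm_pow]
    _ ≤ ‖t‖ ^ (n + 1) * (‖q‖ * (2 * ‖m‖) ^ n / n.factorial) := by
        gcongr; exact norm_pow_succ_le_of_commutator_eq_sq h n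
    _ = ‖t‖ * ‖q‖ * ((‖t‖ * (2 * ‖m‖)) ^ n / n.factorial) := by ring

/-- Summing `m ^ (n + 1) a - a m ^ (n + 1) = (n + 1) q m ^ n a` against the exponential series:
in effect `exp (t m) a exp (-t m) = (1 - t q)⁻¹ a`. -/
theorem exp_smul_mul_sub_mul_exp_smul [CompleteSpace A] (h : m * q - q * m = q * q)
    (ha : m * a - a * m = q * a) (t : ℂ) :
    exp (t • m) * a - a * exp (t • m) = t • (q * (exp (t • m) * a)) := by
  set c : ℕ → ℂ := fun n => (n.factorial : ℂ)⁻¹ * t ^ n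
  have hexp : HasSum (fun n => c n • m ^ n) (exp (t • m)) := by
    simpa only [smul_pow, smul_smul] using exp_series_hasSum_exp' (𝕂 := ℂ) (t • m)
  have hlhs : HasSum (fun n => c n • (m ^ n * a - a * m ^ n))
      (exp (t • m) * a - a * exp (t • m)) := by
    simpa only [smul_sub, smul_mul_assoc, mul_smul_comm] using
      (hexp.mul_right a).sub (hexp.mul_left a)
  have hrhs : HasSum (fun n => (t * c n) • (q * (m ^ n * a)))
      (t • (q * (exp (t • m) * a))) := by
    simpa only [smul_smul, smul_mul_assoc, mul_smul_comm] using
      ((hexp.mul_right a).mul_left q).const_smul t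
  have hshift : ∀ n, c (n + 1) • (m ^ (n + 1) * a - a * m ^ (n + 1))
      = (t * c n) • (q * (m ^ n * a)) := by
    intro n
    rw [pow_mul_sub_mul_pow_of_commutator_eq h ha, ← Nat.cast_smul_eq_nsmul ℂ, smul_smul]
    congr 1
    simp only [c, Nat.factorial_succ]
    push_cast
    field_simp
    ring
  refine hlhs.unique ((hasSum_nat_add_iff' 1).mp ?_)
  simpa [hshift] using hrhs

theorem mem_spectrum_sub_of_commutator [CompleteSpace A] (h : m * q - q * m = q * q)
    (ha : m * a - a * m = q * a) {z : ℂ} (hz : z ≠ 0) (hmem : z ∈ spectrum ℂ a) :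
    z ∈ spectrum ℂ (a - q) := by
  rw [spectrum.mem_iff] at hmem ⊢
  contrapose! hmem with hunit
  set t : ℂ := -z⁻¹
  set W := exp (t • m)
  have hW : IsUnit W := isUnit_exp_of_mem_ball (𝕂 := ℂ)
    ((expSeries_radius_eq_top ℂ A).symm ▸ edist_lt_top _ _)
  have hconj : (1 - t • q) * W * a = a * W := by
    have := exp_smul_mul_sub_mul_exp_smul h ha t
    simp only [sub_mul, one_mul, smul_mul_assoc, mul_assoc]
    rw [← this]; abel
  obtain ⟨u, hu⟩ := (isUnit_one_sub_smul_of_commutator_eq_sq h t).mul hW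
  have key : (u : A) * (algebraMap ℂ A z - a) = (algebraMap ℂ A z - (a - q)) * W := by
    have hzt : z * t = -1 := by simp [t, hz]
    rw [hu, mul_sub, hconj, Algebra.algebraMap_eq_smul_one, mul_smul_one]
    simp only [sub_mul, one_mul, smul_sub, smul_mul_assoc, smul_smul, hzt, neg_one_smul]
    abel
  rw [← Units.isUnit_units_mul u, key]
  exact hunit.mul hW

end BanachAlgebra

instance Ellp.instNontrivial (p : ℝ) : Nontrivial (Ellp p) :=
  ⟨⟨lp.single _ 0 1, 0, fun h => by simpa using congr_arg (fun x : Ellp p => x 0) h⟩⟩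

/-- The matrix product, for lower-triangular `A` and `B`: only `k ≤ j ≤ n` contributes to the
entry `(n, k)`. -/
def lowerTriangularMul (A B : ℕ → ℕ → ℂ) : ℕ → ℕ → ℂ := fun n k =>
  ∑ j ∈ Finset.Icc k n, A n j * B j k

namespace Represents

variable {p : ℝ} [Fact (1 ≤ ENNReal.ofReal p)] {S T : Ellp p →L[ℂ] Ellp p} {A B : ℕ → ℕ → ℂ}

theorem ext (hS : Represents p S A) (hT : Represents p T A) : S = T :=
  lp.ext_continuousLinearMap ENNReal.ofReal_ne_top fun k =>
    ContinuousLinearMap.ext_ring <| lp.ext <| funext fun n => (hS k n).trans (hT k n).symm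

theorem sub (hS : Represents p S A) (hT : Represents p T B) : Represents p (S - T) (A - B) :=
  fun k n => congrArg₂ (· - ·) (hS k n) (hT k n)

theorem apply_single (hS : Represents p S A) (j : ℕ) (c : ℂ) (n : ℕ) :
    (S (lp.single _ j c) : ℕ → ℂ) n = c * A n j := by
  have hsingle : lp.single (E := fun _ : ℕ => ℂ) (ENNReal.ofReal p) j c
      = c • lp.single _ j 1 := by
    rw [← lp.single_smul, smul_eq_mul, mul_one]
  rw [hsingle, map_smul, lp.coeFn_smul, Pi.smul_apply, hS j n, smul_eq_mul]

theorem mul (hS : Represents p S A) (hT : Represents p T B)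
    (hA : ∀ n j, n < j → A n j = 0) (hB : ∀ j k, j < k → B j k = 0) :
    Represents p (S * T) (lowerTriangularMul A B) := by
  intro k n
  have hsum : HasSum (fun j => (S (lp.single _ j ((T (lp.single _ k 1) : ℕ → ℂ) j)) : ℕ → ℂ) n)
      ((S (T (lp.single _ k 1)) : ℕ → ℂ) n) :=
    (lp.hasSum_single ENNReal.ofReal_ne_top (T (lp.single _ k 1))).map
      ((lp.evalCLM ℂ _ _ n).comp S) (by fun_prop)
  simp only [hS.apply_single, hT k] at hsum
  refine hsum.unique (hasSum_sum_of_ne_finset_zero (s := Finset.Icc k n) fun j hj => ?_) |>.trans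
    (Finset.sum_congr rfl fun j _ => mul_comm _ _)
  rcases lt_or_ge j k with hjk | hkj
  · rw [hB j k hjk, zero_mul]
  · rw [hA n j (by simpa [hkj] using hj), mul_zero]

end Represents

section Matrices

variable {p : ℝ} {ω : ℕ → ℝ} {n j k : ℕ}

theorem volMat_of_le (f : ℕ → ℂ) (h : n ≤ k) : volMat p ω f n k = 0 := if_neg h.not_gt

theorem multMat_of_lt (f : ℕ → ℂ) (h : n < k) : multMat p ω f n k = 0 := if_neg h.not_ge

theorem volMat_sub (f₁ f₂ : ℕ → ℂ) :
    volMat p ω (f₁ - f₂) = volMat p ω f₁ - volMat p ω f₂ := by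
  funext n k
  simp only [volMat, Pi.sub_apply]
  split_ifs <;> ring

/-- Both products carry `h (n - j) f (j - k)` and the weight `ω_n^{1/p} / ω_k^{1/p}`, and
`(j - k) / j - (j - k) / n = ((n - j) / n) ((j - k) / j)`. -/
theorem multMat_mul_volMat_sub_volMat_mul_multMat (hω : ∀ n, 0 < ω n) (f h : ℕ → ℂ)
    (hkj : k ≤ j) (hjn : j ≤ n) :
    multMat p ω h n j * volMat p ω f j k
        - volMat p ω f n (n + k - j) * multMat p ω h (n + k - j) k
      = volMat p ω h n j * volMat p ω f j k := by
  have hr : ∀ i, ((ω i ^ p⁻¹ : ℝ) : ℂ) ≠ 0 := fun i =>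
    Complex.ofReal_ne_zero.mpr (Real.rpow_pos_of_pos (hω i) _).ne'
  rcases hkj.lt_or_eq with hkj | rfl
  · rcases hjn.lt_or_eq with hjn | rfl
    · simp only [volMat, multMat, one_div, if_pos hkj, if_pos hjn, if_pos hjn.le,
        if_pos (show n + k - j < n by omega), if_pos (show k ≤ n + k - j by omega),
        show n - (n + k - j) = j - k by omega, show n + k - j - k = n - j by omega]
      have hn : (n : ℂ) ≠ 0 := by exact_mod_cast (show n ≠ 0 by omega)
      have hj : (j : ℂ) ≠ 0 := by exact_mod_cast (show j ≠ 0 by omega)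
      push_cast [Nat.cast_sub (show j ≤ n + k by omega)]
      field_simp [hr n, hr j, hr k, hr (n + k - j)]
      ring
    · simp [volMat_of_le _ le_rfl, multMat, hr]
      ring
  · simp [volMat_of_le _ le_rfl]

/-- The matrix form of integration by parts: `(h · T_f x)' = h' · T_f x + h · x f'`. -/
theorem lowerTriangularMul_multMat_volMat_sub (hω : ∀ n, 0 < ω n) (f h : ℕ → ℂ) :
    lowerTriangularMul (multMat p ω h) (volMat p ω f)
        - lowerTriangularMul (volMat p ω f) (multMat p ω h)
      = lowerTriangularMul (volMat p ω h) (volMat p ω f) := by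
  funext n k
  have hreflect : ∑ j ∈ Finset.Icc k n, volMat p ω f n j * multMat p ω h j k
      = ∑ j ∈ Finset.Icc k n, volMat p ω f n (n + k - j) * multMat p ω h (n + k - j) k :=
    Finset.sum_nbij' (fun j => n + k - j) (fun j => n + k - j)
      (fun j hj => by simp only [Finset.mem_Icc] at hj ⊢; omega)
      (fun j hj => by simp only [Finset.mem_Icc] at hj ⊢; omega)
      (fun j hj => by simp only [Finset.mem_Icc] at hj; omega)
      (fun j hj => by simp only [Finset.mem_Icc] at hj; omega)
      (fun j hj => by simp only [Finset.mem_Icc] at hj; congr 2 <;> omega)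
  simp only [Pi.sub_apply, lowerTriangularMul, hreflect, ← Finset.sum_sub_distrib]
  refine Finset.sum_congr rfl fun j hj => ?_
  rw [Finset.mem_Icc] at hj
  exact multMat_mul_volMat_sub_volMat_mul_multMat hω f h hj.1 hj.2

end Matrices

theorem commutator_eq_of_represents {p : ℝ} [Fact (1 ≤ ENNReal.ofReal p)] {ω : ℕ → ℝ}
    (hω : ∀ n, 0 < ω n) {f h : ℕ → ℂ} {Mh Tf Th : Ellp p →L[ℂ] Ellp p}
    (hMh : Represents p Mh (multMat p ω h)) (hTf : Represents p Tf (volMat p ω f))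
    (hTh : Represents p Th (volMat p ω h)) :
    Mh * Tf - Tf * Mh = Th * Tf := by
  have hmult : ∀ n k, n < k → multMat p ω h n k = 0 := fun _ _ => multMat_of_lt h
  have hvol : ∀ f n k, n < k → volMat p ω f n k = 0 := fun f _ _ hnk => volMat_of_le f hnk.le
  have hcomm := (hMh.mul hTf hmult (hvol f)).sub (hTf.mul hMh (hvol f) hmult)
  rw [lowerTriangularMul_multMat_volMat_sub hω] at hcomm
  exact hcomm.ext (hTh.mul hTf (hvol h) (hvol f))

theorem volterra_quasinilpotent_general (p : ℝ) [Fact (1 ≤ ENNReal.ofReal p)]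
    (ω : ℕ → ℝ) (hω : ∀ n, 0 < ω n)
    (g : ℕ → ℂ) (Tg : Ellp p →L[ℂ] Ellp p)
    (hTg : Represents p Tg (volMat p ω g))
    (hclosure : ∀ ε : ℝ, 0 < ε → ∃ h : ℕ → ℂ, ∃ Mh Tgh : Ellp p →L[ℂ] Ellp p,
      Represents p Mh (multMat p ω h) ∧
      Represents p Tgh (volMat p ω (fun n => g n - h n)) ∧ ‖Tgh‖ < ε) :
    spectrum ℂ Tg = {0} := by
  refine (spectrum.nonempty Tg).subset_singleton_iff.mp fun z hz => ?_
  by_contra hz0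
  obtain ⟨h, Mh, Tgh, hMh, hTgh, hsmall⟩ := hclosure ‖z‖ (norm_pos_iff.mpr hz0)
  have hQ : Represents p (Tg - Tgh) (volMat p ω h) := by
    have hsub := hTg.sub hTgh
    rwa [show (fun n => g n - h n) = g - h from rfl, volMat_sub, sub_sub_cancel] at hsub
  have hmem := mem_spectrum_sub_of_commutator (commutator_eq_of_represents hω hMh hQ hQ)
    (commutator_eq_of_represents hω hMh hTg hQ) hz0 hz
  rw [sub_sub_cancel] at hmem
  exact (spectrum.norm_le_norm_of_mem hmem).not_gt hsmall

/-- If `g` lies in the closure of the multiplier algebra `Mult(ℓ^p_A(ω))` inside the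
space of symbols inducing bounded generalized Volterra operators (with the operator norm
`‖T_h‖`), then `T_g` is quasi-nilpotent on `ℓ^p_A(ω)`: its spectrum is `{0}`. -/
theorem volterra_quasinilpotent (p : ℝ) (hp : 1 < p) [Fact (1 ≤ ENNReal.ofReal p)]
    (ω : ℕ → ℝ) (hω : ∀ n, 0 < ω n)
    (hratio : Filter.Tendsto (fun n => ω n / ω (n + 1)) Filter.atTop (nhds 1))
    (g : ℕ → ℂ) (Tg : Ellp p →L[ℂ] Ellp p)
    (hTg : Represents p Tg (volMat p ω g))
    (hclosure : ∀ ε : ℝ, 0 < ε → ∃ h : ℕ → ℂ, ∃ Mh Tgh : Ellp p →L[ℂ] Ellp p,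
      Represents p Mh (multMat p ω h) ∧
      Represents p Tgh (volMat p ω (fun n => g n - h n)) ∧ ‖Tgh‖ < ε) :
    spectrum ℂ Tg = {0} :=
  volterra_quasinilpotent_general p ω hω g Tg hTg hclosure
end
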